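/- arXiv:1305.0734 — 4 statements merged into one kernel-verified Lean document; each statement's English description precedes it below -/
import Mathlib

section
/- Let R be a root system in (ℝ^{n+2}, B) with multiplicity function k, positive subsystem R_+, and γ_k = Σ_{α∈R_+} k(α). Let q(X) := B(X,X). Then for every smooth f : ℝ^{n+2} → ℝ and every X with B(α,X) ≠ 0 for all α ∈ R_+: Δ_k(q·f)(X) = q(X)·(Δ_k f)(X) + (2(n+2) + 4γ_k)·f(X) + 4·Df(X)(X). Equivalently, with E := −¼q (as multiplication operator), F := Δ_k and H := (n+2)/2 + γ_k + Euler operator (Hf(X) = ((n+2)/2 + γ_k)f(X) + Df(X)(X)), one has the sl(2)-relation [E,F] = H. -/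
open scoped BigOperators
open Real

noncomputable section

/-- The middle index `i+1` in `Fin (n+2)` for `i : Fin n`
(coordinates are `X^0, X^1, …, X^n, X^∞`). -/
def mid (n : ℕ) (i : Fin n) : Fin (n + 2) := i.succ.castSucc

/-- The last index, corresponding to the coordinate `X^∞`. -/
def infIdx (n : ℕ) : Fin (n + 2) := Fin.last (n + 1)

/-- The symmetric bilinear form
`B(X,Y) = X^0 Y^∞ + X^∞ Y^0 + Σ_{i=1}^n X^i Y^i` of signature `(n+1,1)`. -/
def Bform (n : ℕ) (X Y : Fin (n + 2) → ℝ) : ℝ :=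
  X 0 * Y (infIdx n) + X (infIdx n) * Y 0 + ∑ i : Fin n, X (mid n i) * Y (mid n i)

/-- The reflection `R_α X = X − 2 (B(α,X)/B(α,α)) α`. -/
def reflct (n : ℕ) (α X : Fin (n + 2) → ℝ) : Fin (n + 2) → ℝ :=
  X - (2 * Bform n α X / Bform n α α) • α

/-- The `j`-th coordinate vector of the ambient space. -/
def basisVec (n : ℕ) (j : Fin (n + 2)) : Fin (n + 2) → ℝ := Pi.single j 1

/-- The ambient Laplacian `Δ̃ = 2 ∂_{X^0} ∂_{X^∞} + Σ_{i=1}^n ∂²_{X^i}`. -/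
def ambLap (n : ℕ) (f : (Fin (n + 2) → ℝ) → ℝ) (X : Fin (n + 2) → ℝ) : ℝ :=
  2 * fderiv ℝ (fun Y => fderiv ℝ f Y (basisVec n 0)) X (basisVec n (infIdx n))
    + ∑ i : Fin n,
        fderiv ℝ (fun Y => fderiv ℝ f Y (basisVec n (mid n i))) X (basisVec n (mid n i))

/-- The Dunkl–Laplace operator
`(Δ_k f)(X) = (Δ̃f)(X) + 2 Σ_{α∈R_+} k(α) [Df(X)(α)/B(α,X) − (f(X) − f(R_α X))/B(α,X)²]`. -/
def dunklLap (n : ℕ) (Rplus : Finset (Fin (n + 2) → ℝ)) (k : (Fin (n + 2) → ℝ) → ℝ)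
    (f : (Fin (n + 2) → ℝ) → ℝ) (X : Fin (n + 2) → ℝ) : ℝ :=
  ambLap n f X + 2 * ∑ α ∈ Rplus, k α *
    (fderiv ℝ f X α / Bform n α X - (f X - f (reflct n α X)) / (Bform n α X) ^ 2)

/-- The point `X(x) = (1, x_1, …, x_n, −½ Σ x_i²)` of the null cone. -/
def Xmap (n : ℕ) (x : Fin n → ℝ) : Fin (n + 2) → ℝ :=
  Fin.cons 1 (Fin.snoc (fun i => x i) (-(1 / 2) * ∑ i : Fin n, (x i) ^ 2))

/-- The ρ-independent `w`-homogeneous extension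
`f̃(X) = (X^0)^w f(X^1/X^0, …, X^n/X^0)`. -/
def ftil (n : ℕ) (w : ℝ) (f : (Fin n → ℝ) → ℝ) (X : Fin (n + 2) → ℝ) : ℝ :=
  (X 0) ^ w * f (fun i => X (mid n i) / X 0)

/-- A root system in `(ℝ^{n+2}, B)`: a finite set of non-null vectors with
`R ∩ ℝα = {α, −α}` and `R_α(R) = R` for all `α ∈ R`. -/
def IsRootSystem (n : ℕ) (R : Finset (Fin (n + 2) → ℝ)) : Prop :=
  (∀ α ∈ R, Bform n α α ≠ 0) ∧
  (∀ α ∈ R, -α ∈ R) ∧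
  (∀ α ∈ R, ∀ β ∈ R, (∃ c : ℝ, β = c • α) → β = α ∨ β = -α) ∧
  (∀ α ∈ R, ∀ β ∈ R, reflct n α β ∈ R)

/-- A multiplicity function: `k(R_β α) = k(α)` for all roots `α, β`. -/
def IsMultiplicity (n : ℕ) (R : Finset (Fin (n + 2) → ℝ))
    (k : (Fin (n + 2) → ℝ) → ℝ) : Prop :=
  ∀ α ∈ R, ∀ β ∈ R, k (reflct n β α) = k α

/-- A positive subsystem: `R` is the disjoint union of `R_+` and `−R_+`. -/
def IsPositive (n : ℕ) (R Rplus : Finset (Fin (n + 2) → ℝ)) : Prop :=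
  Rplus ⊆ R ∧ (∀ α ∈ R, α ∈ Rplus ∨ -α ∈ Rplus) ∧ (∀ α ∈ Rplus, -α ∉ Rplus)

namespace Stmt7Aux

variable {n : ℕ}

lemma Bform_symm (X Y : Fin (n+2) → ℝ) : Bform n X Y = Bform n Y X := by
  unfold Bform
  rw [Finset.sum_congr rfl (fun i _ => mul_comm (X (mid n i)) (Y (mid n i)))]
  ring

lemma Bform_sub_left (a b c : Fin (n+2) → ℝ) :
    Bform n (a - b) c = Bform n a c - Bform n b c := by
  unfold Bform
  simp only [Pi.sub_apply, sub_mul]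
  rw [Finset.sum_sub_distrib]
  ring

lemma Bform_smul_left (s : ℝ) (a c : Fin (n+2) → ℝ) :
    Bform n (s • a) c = s * Bform n a c := by
  unfold Bform
  simp only [Pi.smul_apply, smul_eq_mul, mul_assoc]
  rw [← Finset.mul_sum]
  ring

lemma Bform_sub_right (a b c : Fin (n+2) → ℝ) :
    Bform n a (b - c) = Bform n a b - Bform n a c := by
  rw [Bform_symm, Bform_sub_left, Bform_symm b, Bform_symm c]

lemma Bform_smul_right (s : ℝ) (a c : Fin (n+2) → ℝ) :
    Bform n a (s • c) = s * Bform n a c := by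
  rw [Bform_symm, Bform_smul_left, Bform_symm]

lemma q_reflct (α X : Fin (n+2) → ℝ) (h : Bform n α α ≠ 0) :
    Bform n (reflct n α X) (reflct n α X) = Bform n X X := by
  unfold reflct
  simp only [Bform_sub_left, Bform_sub_right, Bform_smul_left, Bform_smul_right]
  rw [Bform_symm X α]
  field_simp
  ring

def BclmR (n : ℕ) (c : Fin (n+2) → ℝ) : (Fin (n+2) → ℝ) →L[ℝ] ℝ :=
  c 0 • ContinuousLinearMap.proj (infIdx n) + c (infIdx n) • ContinuousLinearMap.proj 0
    + ∑ i : Fin n, c (mid n i) • ContinuousLinearMap.proj (mid n i)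

lemma BclmR_apply (c v : Fin (n+2) → ℝ) : BclmR n c v = Bform n c v := by
  simp [BclmR, Bform, ContinuousLinearMap.sum_apply]

lemma hasFDerivAt_B_right (c X : Fin (n+2) → ℝ) :
    HasFDerivAt (fun Y => Bform n c Y) (BclmR n c) X := by
  have h : (fun Y : Fin (n+2) → ℝ => Bform n c Y) = fun Y => BclmR n c Y :=
    funext fun Y => (BclmR_apply c Y).symm
  rw [h]
  exact (BclmR n c).hasFDerivAt

lemma hasFDerivAt_B_left (v X : Fin (n+2) → ℝ) :
    HasFDerivAt (fun Y => Bform n Y v) (BclmR n v) X := by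
  have h : (fun Y : Fin (n+2) → ℝ => Bform n Y v) = fun Y => Bform n v Y :=
    funext fun Y => Bform_symm Y v
  rw [h]; exact hasFDerivAt_B_right v X

lemma hasFDerivAt_coord (j : Fin (n+2)) (X : Fin (n+2) → ℝ) :
    HasFDerivAt (fun Y : Fin (n+2) → ℝ => Y j)
      (ContinuousLinearMap.proj (R := ℝ) (φ := fun _ : Fin (n+2) => ℝ) j) X :=
  (ContinuousLinearMap.proj (R := ℝ) (φ := fun _ : Fin (n+2) => ℝ) j).hasFDerivAt

lemma hasFDerivAt_q (X : Fin (n+2) → ℝ) :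
    HasFDerivAt (fun Y => Bform n Y Y) ((2:ℝ) • BclmR n X) X := by
  have h0 := (hasFDerivAt_coord (n := n) 0 X).fun_mul (hasFDerivAt_coord (infIdx n) X)
  have h1 := (hasFDerivAt_coord (n := n) (infIdx n) X).fun_mul (hasFDerivAt_coord 0 X)
  have h2 := HasFDerivAt.fun_sum (fun i (_ : i ∈ Finset.univ) =>
    (hasFDerivAt_coord (n := n) (mid n i) X).fun_mul (hasFDerivAt_coord (mid n i) X))
  have h := (h0.fun_add h1).fun_add h2
  have heq : (fun Y : Fin (n+2) → ℝ =>
      (Y 0 * Y (infIdx n) + Y (infIdx n) * Y 0) + ∑ i : Fin n, Y (mid n i) * Y (mid n i))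
      = fun Y => Bform n Y Y := by
    funext Y; simp [Bform]
  rw [heq] at h
  have hD : (X 0 • ContinuousLinearMap.proj (R := ℝ) (φ := fun _ : Fin (n+2) => ℝ) (infIdx n) + X (infIdx n) • ContinuousLinearMap.proj 0 +
        (X (infIdx n) • ContinuousLinearMap.proj 0 + X 0 • ContinuousLinearMap.proj (infIdx n)) +
      ∑ i : Fin n,
        (X (mid n i) • ContinuousLinearMap.proj (mid n i) + X (mid n i) • ContinuousLinearMap.proj (mid n i)))
      = (2:ℝ) • BclmR n X := by
    apply ContinuousLinearMap.ext; intro v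
    simp only [ContinuousLinearMap.add_apply, ContinuousLinearMap.smul_apply,
      ContinuousLinearMap.sum_apply, ContinuousLinearMap.proj_apply, smul_eq_mul,
      BclmR_apply, Bform, Finset.sum_add_distrib]
    ring
  exact hD ▸ h

variable {f : (Fin (n + 2) → ℝ) → ℝ}

lemma hasFDerivAt_qf (hf : ContDiff ℝ (⊤ : ℕ∞) f) (Y : Fin (n+2) → ℝ) :
    HasFDerivAt (fun Z => Bform n Z Z * f Z)
      (Bform n Y Y • fderiv ℝ f Y + f Y • ((2:ℝ) • BclmR n Y)) Y :=
  (hasFDerivAt_q Y).mul (hf.differentiable (by simp) Y).hasFDerivAt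

lemma fderiv_qf_apply (hf : ContDiff ℝ (⊤ : ℕ∞) f) (Y v : Fin (n+2) → ℝ) :
    fderiv ℝ (fun Z => Bform n Z Z * f Z) Y v
      = Bform n Y Y * fderiv ℝ f Y v + f Y * (2 * Bform n Y v) := by
  rw [(hasFDerivAt_qf hf Y).fderiv]
  simp [BclmR_apply]

lemma key2 (hf : ContDiff ℝ (⊤ : ℕ∞) f) (X v w : Fin (n+2) → ℝ) :
    fderiv ℝ (fun Y => fderiv ℝ (fun Z => Bform n Z Z * f Z) Y v) X w
      = Bform n X X * fderiv ℝ (fun Y => fderiv ℝ f Y v) X w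
        + fderiv ℝ f X v * (2 * Bform n X w)
        + f X * (2 * Bform n w v)
        + 2 * Bform n X v * fderiv ℝ f X w := by
  have hdf : Differentiable ℝ (fun Y => fderiv ℝ f Y v) := fun Y =>
    ((hf.fderiv_right (m := (⊤ : ℕ∞)) (by simp)).differentiable (by simp) Y).clm_apply
      (differentiableAt_const v)
  have hgv : (fun Y => fderiv ℝ (fun Z => Bform n Z Z * f Z) Y v)
      = fun Y => Bform n Y Y * fderiv ℝ f Y v + f Y * (2 * Bform n Y v) :=
    funext fun Y => fderiv_qf_apply hf Y v
  rw [hgv]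
  have h1 : HasFDerivAt (fun Y => Bform n Y Y * fderiv ℝ f Y v)
      (Bform n X X • fderiv ℝ (fun Y => fderiv ℝ f Y v) X
        + fderiv ℝ f X v • ((2:ℝ) • BclmR n X)) X :=
    (hasFDerivAt_q X).mul (hdf X).hasFDerivAt
  have h2b : HasFDerivAt (fun Z : Fin (n+2) → ℝ => 2 * Bform n Z v)
      ((2:ℝ) • BclmR n v) X := (hasFDerivAt_B_left v X).const_mul 2
  have h2 : HasFDerivAt (fun Y => f Y * (2 * Bform n Y v))
      (f X • ((2:ℝ) • BclmR n v) + (2 * Bform n X v) • fderiv ℝ f X) X :=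
    ((hf.differentiable (by simp) X).hasFDerivAt).mul h2b
  rw [(h1.fun_add h2).fderiv]
  simp only [ContinuousLinearMap.add_apply, ContinuousLinearMap.smul_apply, smul_eq_mul,
    BclmR_apply]
  rw [Bform_symm v w]
  ring

lemma mid_injective : Function.Injective (mid n) := by
  intro i j h
  have := Fin.val_eq_of_eq h
  simp [mid] at this
  exact Fin.ext this

lemma mid_ne_zero (i : Fin n) : mid n i ≠ 0 := by
  simp [mid, Fin.ext_iff]

lemma mid_ne_inf (i : Fin n) : mid n i ≠ infIdx n := by
  simp [mid, infIdx, Fin.ext_iff]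
  omega

lemma inf_ne_zero : infIdx n ≠ 0 := by
  simp [infIdx, Fin.ext_iff]

lemma sum_decomp (g : Fin (n+2) → ℝ) :
    ∑ j, g j = g 0 + (∑ i : Fin n, g (mid n i)) + g (infIdx n) := by
  rw [Fin.sum_univ_succ, Fin.sum_univ_castSucc]
  have h1 : ∀ i : Fin n, (i.castSucc).succ = mid n i := by
    intro i; simp [mid, Fin.ext_iff]
  have h2 : (Fin.last n).succ = infIdx n := by
    simp [infIdx, Fin.ext_iff]
  simp only [h1, h2]
  ring

lemma B_X_e0 (X : Fin (n+2) → ℝ) : Bform n X (basisVec n 0) = X (infIdx n) := by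
  simp [Bform, basisVec, Pi.single_apply, inf_ne_zero, mid_ne_zero]

lemma B_X_einf (X : Fin (n+2) → ℝ) : Bform n X (basisVec n (infIdx n)) = X 0 := by
  simp [Bform, basisVec, Pi.single_apply, inf_ne_zero, mid_ne_inf]

lemma B_X_emid (X : Fin (n+2) → ℝ) (i : Fin n) :
    Bform n X (basisVec n (mid n i)) = X (mid n i) := by
  simp [Bform, basisVec, Pi.single_apply, (mid_ne_zero i).symm, (mid_ne_inf i).symm,
    mid_injective.eq_iff, Finset.sum_ite_eq]

lemma B_einf_e0 : Bform n (basisVec n (infIdx n)) (basisVec n 0) = 1 := by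
  rw [B_X_e0]; simp [basisVec]

lemma B_emid_emid (i : Fin n) : Bform n (basisVec n (mid n i)) (basisVec n (mid n i)) = 1 := by
  rw [B_X_emid]; simp [basisVec]

lemma bv_self (j : Fin (n+2)) : basisVec n j j = 1 := by simp [basisVec]

lemma euler (X : Fin (n+2) → ℝ) :
    fderiv ℝ f X X
      = X 0 * fderiv ℝ f X (basisVec n 0)
        + (∑ i : Fin n, X (mid n i) * fderiv ℝ f X (basisVec n (mid n i)))
        + X (infIdx n) * fderiv ℝ f X (basisVec n (infIdx n)) := by
  have hX : X = ∑ j, X j • basisVec n j := by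
    funext l
    rw [Finset.sum_apply]
    simp [basisVec, Pi.single_apply]
  have h2 : fderiv ℝ f X X = ∑ j, X j * fderiv ℝ f X (basisVec n j) := by
    calc fderiv ℝ f X X = fderiv ℝ f X (∑ j, X j • basisVec n j) := congrArg _ hX
    _ = ∑ j, X j * fderiv ℝ f X (basisVec n j) := by
        rw [map_sum]; simp
  rw [h2, sum_decomp (fun j => X j * fderiv ℝ f X (basisVec n j))]

lemma amb_key (hf : ContDiff ℝ (⊤ : ℕ∞) f) (X : Fin (n+2) → ℝ) :
    ambLap n (fun Y => Bform n Y Y * f Y) X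
      = Bform n X X * ambLap n f X + (2 * ((n:ℝ) + 2)) * f X + 4 * fderiv ℝ f X X := by
  unfold ambLap
  rw [key2 hf X (basisVec n 0) (basisVec n (infIdx n))]
  rw [Finset.sum_congr rfl
    (fun i _ => key2 hf X (basisVec n (mid n i)) (basisVec n (mid n i)))]
  rw [Finset.sum_congr rfl (fun i _ => by
    rw [B_X_emid, B_emid_emid]
    ring :
    ∀ i ∈ Finset.univ,
      Bform n X X * fderiv ℝ (fun Y => fderiv ℝ f Y (basisVec n (mid n i))) X (basisVec n (mid n i))
        + fderiv ℝ f X (basisVec n (mid n i)) * (2 * Bform n X (basisVec n (mid n i)))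
        + f X * (2 * Bform n (basisVec n (mid n i)) (basisVec n (mid n i)))
        + 2 * Bform n X (basisVec n (mid n i)) * fderiv ℝ f X (basisVec n (mid n i))
      = Bform n X X * fderiv ℝ (fun Y => fderiv ℝ f Y (basisVec n (mid n i))) X (basisVec n (mid n i))
        + 4 * (X (mid n i) * fderiv ℝ f X (basisVec n (mid n i)))
        + 2 * f X)]
  rw [Finset.sum_add_distrib, Finset.sum_add_distrib, ← Finset.mul_sum, ← Finset.mul_sum,
    Finset.sum_const, Finset.card_univ, Fintype.card_fin, nsmul_eq_mul]
  rw [euler X]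
  simp only [B_X_e0, B_X_einf, bv_self]
  ring

lemma dunkl_term (hf : ContDiff ℝ (⊤ : ℕ∞) f) (α X : Fin (n+2) → ℝ)
    (hαα : Bform n α α ≠ 0) (hB : Bform n α X ≠ 0) :
    fderiv ℝ (fun Z => Bform n Z Z * f Z) X α / Bform n α X
      - (Bform n X X * f X
          - Bform n (reflct n α X) (reflct n α X) * f (reflct n α X)) / (Bform n α X) ^ 2
    = Bform n X X * (fderiv ℝ f X α / Bform n α X
        - (f X - f (reflct n α X)) / (Bform n α X) ^ 2) + 2 * f X := by
  rw [fderiv_qf_apply hf, q_reflct α X hαα, Bform_symm X α]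
  field_simp
  ring

end Stmt7Aux

/-- with `q(X) = B(X,X)` and `γ_k = Σ_{α∈R_+} k(α)`,
`Δ_k(q·f)(X) = q(X)·(Δ_k f)(X) + (2(n+2) + 4γ_k)·f(X) + 4·Df(X)(X)`, i.e. the
`sl(2)`-relation `[E,F] = H` for `E = −¼q`, `F = Δ_k`,
`H = (n+2)/2 + γ_k + Euler operator`. -/


theorem stmt7 (n : ℕ) (hn : 1 ≤ n)
    (R Rplus : Finset (Fin (n + 2) → ℝ)) (k : (Fin (n + 2) → ℝ) → ℝ)
    (hR : IsRootSystem n R) (hk : IsMultiplicity n R k) (hP : IsPositive n R Rplus)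
    (f : (Fin (n + 2) → ℝ) → ℝ) (hf : ContDiff ℝ (⊤ : ℕ∞) f)
    (X : Fin (n + 2) → ℝ) (hX : ∀ α ∈ Rplus, Bform n α X ≠ 0) :
    dunklLap n Rplus k (fun Y => Bform n Y Y * f Y) X
      = Bform n X X * dunklLap n Rplus k f X
        + (2 * ((n : ℝ) + 2) + 4 * ∑ α ∈ Rplus, k α) * f X
        + 4 * fderiv ℝ f X X := by
  classical
  open Stmt7Aux in
  unfold dunklLap
  rw [Stmt7Aux.amb_key hf X]
  have hsum : ∑ α ∈ Rplus, k α *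
      (fderiv ℝ (fun Y => Bform n Y Y * f Y) X α / Bform n α X
        - (Bform n X X * f X
            - Bform n (reflct n α X) (reflct n α X) * f (reflct n α X)) / (Bform n α X) ^ 2)
      = ∑ α ∈ Rplus, (Bform n X X *
          (k α * (fderiv ℝ f X α / Bform n α X
            - (f X - f (reflct n α X)) / (Bform n α X) ^ 2)) + 2 * (k α * f X)) := by
    refine Finset.sum_congr rfl (fun α hα => ?_)
    rw [Stmt7Aux.dunkl_term hf α X (hR.1 α (hP.1 hα)) (hX α hα)]
    ring
  rw [hsum, Finset.sum_add_distrib, ← Finset.mul_sum, ← Finset.mul_sum, ← Finset.sum_mul]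
  ring
end
end

section
/- Let R be a root system in (ℝ^{n+2}, B) with multiplicity function k, positive subsystem R_+, and γ_k = Σ_{α∈R_+} k(α), and let Ω := {X ∈ ℝ^{n+2} : X ≠ 0 and B(α,X) ≠ 0 for all α ∈ R_+}. For f smooth on Ω define (Hf)(X) := ((n+2)/2 + γ_k)·f(X) + Df(X)(X). Then for every smooth f on Ω and every X ∈ Ω: Δ_k(Hf)(X) − H(Δ_k f)(X) = 2·(Δ_k f)(X); i.e. the sl(2)-relation [F,H] = 2F holds with F = Δ_k. -/
open scoped BigOperators
open Real

noncomputable section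

open Topology Filter in
lemma _dummy_open : True := trivial

open Topology Filter

-- auxiliary
def bl (n : ℕ) (α : Fin (n + 2) → ℝ) : (Fin (n + 2) → ℝ) →L[ℝ] ℝ :=
  α 0 • ContinuousLinearMap.proj (R := ℝ) (φ := fun _ : Fin (n+2) => ℝ) (infIdx n)
    + α (infIdx n) • ContinuousLinearMap.proj (R := ℝ) (φ := fun _ : Fin (n+2) => ℝ) 0
    + ∑ i : Fin n, α (mid n i) • ContinuousLinearMap.proj (R := ℝ) (φ := fun _ : Fin (n+2) => ℝ) (mid n i)

lemma bl_apply {n : ℕ} (α Y : Fin (n + 2) → ℝ) : bl n α Y = Bform n α Y := by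
  simp [bl, Bform, ContinuousLinearMap.sum_apply]

lemma bl_coe {n : ℕ} (α : Fin (n + 2) → ℝ) : ⇑(bl n α) = fun Y => Bform n α Y :=
  funext fun Y => bl_apply α Y

def rl (n : ℕ) (α : Fin (n + 2) → ℝ) : (Fin (n + 2) → ℝ) →L[ℝ] (Fin (n + 2) → ℝ) :=
  ContinuousLinearMap.id ℝ _ - (2 / Bform n α α) • ((bl n α).smulRight α)

lemma rl_apply {n : ℕ} (α Y : Fin (n + 2) → ℝ) : rl n α Y = reflct n α Y := by
  funext j
  simp [rl, reflct, bl_apply, Pi.smul_apply, smul_eq_mul]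
  ring

lemma rl_coe {n : ℕ} (α : Fin (n + 2) → ℝ) : ⇑(rl n α) = reflct n α :=
  funext fun Y => rl_apply α Y

lemma Bform_comm {n : ℕ} (α Y : Fin (n + 2) → ℝ) : Bform n α Y = Bform n Y α := by
  unfold Bform
  rw [Finset.sum_congr rfl (fun i _ => mul_comm (α (mid n i)) (Y (mid n i)))]
  ring

lemma Bform_neg_left {n : ℕ} (α Y : Fin (n + 2) → ℝ) : Bform n (-α) Y = -Bform n α Y := by
  unfold Bform
  simp only [Pi.neg_apply, neg_mul]
  rw [Finset.sum_neg_distrib]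
  ring

lemma Bform_sub_smul {n : ℕ} (β Y : Fin (n + 2) → ℝ) (b : ℝ) (α : Fin (n + 2) → ℝ) :
    Bform n β (Y - b • α) = Bform n β Y - b * Bform n β α := by
  unfold Bform
  simp only [Pi.sub_apply, Pi.smul_apply, smul_eq_mul, mul_sub, Finset.sum_sub_distrib]
  rw [Finset.sum_congr rfl (fun i _ => mul_left_comm (β (mid n i)) b (α (mid n i))),
    ← Finset.mul_sum]
  ring

lemma Bform_reflct_right {n : ℕ} (β α Y : Fin (n + 2) → ℝ) :
    Bform n β (reflct n α Y)
      = Bform n β Y - (2 * Bform n α Y / Bform n α α) * Bform n β α := by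
  rw [show reflct n α Y = Y - (2 * Bform n α Y / Bform n α α) • α from rfl]
  exact Bform_sub_smul β Y _ α

lemma Bform_self_reflct {n : ℕ} {α : Fin (n + 2) → ℝ} (hαα : Bform n α α ≠ 0)
    (Y : Fin (n + 2) → ℝ) : Bform n α (reflct n α Y) = -Bform n α Y := by
  rw [Bform_reflct_right]
  field_simp
  ring

lemma Bform_reflct_swap {n : ℕ} (β α Y : Fin (n + 2) → ℝ) :
    Bform n β (reflct n α Y) = Bform n (reflct n α β) Y := by
  rw [Bform_reflct_right, Bform_comm (reflct n α β) Y, Bform_reflct_right,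
    Bform_comm Y β, Bform_comm Y α, Bform_comm β α]
  ring

lemma reflct_zero {n : ℕ} (α : Fin (n + 2) → ℝ) : reflct n α 0 = 0 := by
  have h0 : Bform n α 0 = 0 := by simp [Bform]
  funext j
  simp [reflct, h0]

lemma reflct_involutive {n : ℕ} {α : Fin (n + 2) → ℝ} (hαα : Bform n α α ≠ 0)
    (Y : Fin (n + 2) → ℝ) : reflct n α (reflct n α Y) = Y := by
  funext j
  rw [show reflct n α (reflct n α Y) j
      = reflct n α Y j - (2 * Bform n α (reflct n α Y) / Bform n α α) * α j from by
        simp [reflct],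
    Bform_self_reflct hαα]
  simp [reflct]
  ring

lemma hasFDerivAt_div' {E : Type*} [NormedAddCommGroup E] [NormedSpace ℝ E]
    {N D : E → ℝ} {N' D' : E →L[ℝ] ℝ} {x : E}
    (hN : HasFDerivAt N N' x) (hD : HasFDerivAt D D' x) (hx : D x ≠ 0) :
    HasFDerivAt (fun y => N y / D y) ((D x)⁻¹ • N' - (N x / D x ^ 2) • D') x := by
  have hinv : HasFDerivAt (fun y => (D y)⁻¹) ((-(D x ^ 2)⁻¹) • D') x := by
    convert (hasDerivAt_inv hx).comp_hasFDerivAt x hD using 1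
    · ext v; simp
    · rfl
    · rfl
  have h := hN.mul hinv
  have e : (fun y => N y / D y) = fun y => N y * (D y)⁻¹ := funext fun y => div_eq_mul_inv _ _
  rw [e]
  convert h using 1
  · rfl
  · rfl
  ext v
  simp [smul_smul]
  module

lemma reflct_mem {n : ℕ} {R Rplus : Finset (Fin (n + 2) → ℝ)}
    (hR : IsRootSystem n R) (hP : IsPositive n R Rplus)
    {α X : Fin (n + 2) → ℝ} (hα : α ∈ Rplus) (h0 : X ≠ 0)
    (hB : ∀ β ∈ Rplus, Bform n β X ≠ 0) :
    reflct n α X ≠ 0 ∧ ∀ β ∈ Rplus, Bform n β (reflct n α X) ≠ 0 := by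
  have hαR : α ∈ R := hP.1 hα
  have hαα : Bform n α α ≠ 0 := hR.1 α hαR
  constructor
  · intro h
    apply h0
    have h2 := reflct_involutive hαα X
    rw [h, reflct_zero] at h2
    exact h2.symm
  · intro β hβ
    rw [Bform_reflct_swap]
    have hrβ : reflct n α β ∈ R := hR.2.2.2 α hαR β (hP.1 hβ)
    rcases hP.2.1 _ hrβ with h | h
    · exact hB _ h
    · intro hc
      exact hB _ h (by rw [Bform_neg_left, hc, neg_zero])

set_option maxHeartbeats 2000000 in
/-- the `sl(2)`-relation `[F,H] = 2F` with `F = Δ_k` and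
`(Hf)(X) = ((n+2)/2 + γ_k) f(X) + Df(X)(X)`:
`Δ_k(Hf)(X) − H(Δ_k f)(X) = 2 (Δ_k f)(X)` on `Ω`. -/
theorem stmt9 (n : ℕ) (hn : 1 ≤ n)
    (R Rplus : Finset (Fin (n + 2) → ℝ)) (k : (Fin (n + 2) → ℝ) → ℝ)
    (hR : IsRootSystem n R) (hk : IsMultiplicity n R k) (hP : IsPositive n R Rplus)
    (f : (Fin (n + 2) → ℝ) → ℝ)
    (hf : ContDiffOn ℝ (⊤ : ℕ∞) f
      {X : Fin (n + 2) → ℝ | X ≠ 0 ∧ ∀ α ∈ Rplus, Bform n α X ≠ 0})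
    (X : Fin (n + 2) → ℝ) (hX0 : X ≠ 0) (hXα : ∀ α ∈ Rplus, Bform n α X ≠ 0) :
    dunklLap n Rplus k
        (fun Y => (((n : ℝ) + 2) / 2 + ∑ α ∈ Rplus, k α) * f Y + fderiv ℝ f Y Y) X
      - ((((n : ℝ) + 2) / 2 + ∑ α ∈ Rplus, k α) * dunklLap n Rplus k f X
          + fderiv ℝ (fun Y => dunklLap n Rplus k f Y) X X)
      = 2 * dunklLap n Rplus k f X := by
  classical
  set c : ℝ := ((n : ℝ) + 2) / 2 + ∑ α ∈ Rplus, k α with hcdef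
  set F : (Fin (n + 2) → ℝ) → ℝ := fun Y => c * f Y + fderiv ℝ f Y Y with hFdef
  set Ω : Set (Fin (n + 2) → ℝ) := {Y : Fin (n + 2) → ℝ | Y ≠ 0 ∧ ∀ α ∈ Rplus, Bform n α Y ≠ 0} with hΩdef
  have hfΩ : ContDiffOn ℝ (⊤ : ℕ∞) f Ω := hf
  have hXΩ : X ∈ Ω := ⟨hX0, hXα⟩
  have hΩo : IsOpen Ω := by
    have h2 : ∀ α : (Fin (n + 2) → ℝ), IsOpen {Y : (Fin (n + 2) → ℝ) | Bform n α Y ≠ 0} := by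
      intro α
      have hc : Continuous fun Y : (Fin (n + 2) → ℝ) => Bform n α Y := by
        rw [← bl_coe]; exact (bl n α).continuous
      exact isOpen_ne.preimage hc
    have he : Ω = {Y : (Fin (n + 2) → ℝ) | Y ≠ 0} ∩ ⋂ α ∈ Rplus, {Y : (Fin (n + 2) → ℝ) | Bform n α Y ≠ 0} := by
      ext Y
      simp [hΩdef, Set.mem_iInter]
    rw [he]
    exact isOpen_ne.inter (isOpen_biInter_finset fun α _ => h2 α)
  have hnh : Ω ∈ 𝓝 X := hΩo.mem_nhds hXΩ
  have hf1 : ContDiffOn ℝ (⊤ : ℕ∞) (fderiv ℝ f) Ω := hfΩ.fderiv_of_isOpen hΩo (by simp)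
  have hf2' : ContDiffOn ℝ (⊤ : ℕ∞) (fderiv ℝ (fderiv ℝ f)) Ω := hf1.fderiv_of_isOpen hΩo (by simp)
  have hd1 : ∀ Y ∈ Ω, HasFDerivAt f (fderiv ℝ f Y) Y := fun Y hY =>
    ((hfΩ.contDiffAt (hΩo.mem_nhds hY)).differentiableAt (by simp)).hasFDerivAt
  have hd2 : ∀ Y ∈ Ω, HasFDerivAt (fderiv ℝ f) (fderiv ℝ (fderiv ℝ f) Y) Y := fun Y hY =>
    ((hf1.contDiffAt (hΩo.mem_nhds hY)).differentiableAt (by simp)).hasFDerivAt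
  have hd3 : HasFDerivAt (fderiv ℝ (fderiv ℝ f)) (fderiv ℝ (fderiv ℝ (fderiv ℝ f)) X) X :=
    ((hf2'.contDiffAt hnh).differentiableAt (by simp)).hasFDerivAt
  have hsym2 : ∀ Y ∈ Ω, ∀ v w : (Fin (n + 2) → ℝ), fderiv ℝ (fderiv ℝ f) Y v w = fderiv ℝ (fderiv ℝ f) Y w v := fun Y hY =>
    second_derivative_symmetric_of_eventually
      (by filter_upwards [hΩo.mem_nhds hY] with Z hZ using hd1 Z hZ) (hd2 Y hY)
  have hsym3a : ∀ v w : (Fin (n + 2) → ℝ), fderiv ℝ (fderiv ℝ (fderiv ℝ f)) X v w = fderiv ℝ (fderiv ℝ (fderiv ℝ f)) X w v :=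
    second_derivative_symmetric_of_eventually
      (by filter_upwards [hnh] with Z hZ using hd2 Z hZ) hd3
  have hstep : ∀ Y ∈ Ω, ∀ u : (Fin (n + 2) → ℝ), HasFDerivAt (fun Z => fderiv ℝ f Z u)
      ((fderiv ℝ f Y).comp (0 : (Fin (n + 2) → ℝ) →L[ℝ] (Fin (n + 2) → ℝ)) + (fderiv ℝ (fderiv ℝ f) Y).flip u) Y :=
    fun Y hY u => (hd2 Y hY).clm_apply (hasFDerivAt_const u Y)
  have hstep2 : ∀ u w : (Fin (n + 2) → ℝ), HasFDerivAt (fun Z => fderiv ℝ (fderiv ℝ f) Z u w)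
      (((fderiv ℝ (fderiv ℝ f) X u).comp (0 : (Fin (n + 2) → ℝ) →L[ℝ] (Fin (n + 2) → ℝ))) + ((fderiv ℝ (fderiv ℝ f) X).comp (0 : (Fin (n + 2) → ℝ) →L[ℝ] (Fin (n + 2) → ℝ)) + (fderiv ℝ (fderiv ℝ (fderiv ℝ f)) X).flip u).flip w) X :=
    fun u w => (hd3.clm_apply (hasFDerivAt_const u X)).clm_apply (hasFDerivAt_const w X)
  have hsym3b : ∀ u v w : (Fin (n + 2) → ℝ), fderiv ℝ (fderiv ℝ (fderiv ℝ f)) X u v w = fderiv ℝ (fderiv ℝ (fderiv ℝ f)) X u w v := by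
    intro u v w
    have e : (fun Y => fderiv ℝ (fderiv ℝ f) Y v w) =ᶠ[𝓝 X] fun Y => fderiv ℝ (fderiv ℝ f) Y w v := by
      filter_upwards [hnh] with Z hZ using hsym2 Z hZ v w
    have hD1' : HasFDerivAt (fun Y => fderiv ℝ (fderiv ℝ f) Y v w)
        (((fderiv ℝ (fderiv ℝ f) X w).comp (0 : (Fin (n + 2) → ℝ) →L[ℝ] (Fin (n + 2) → ℝ))) + ((fderiv ℝ (fderiv ℝ f) X).comp (0 : (Fin (n + 2) → ℝ) →L[ℝ] (Fin (n + 2) → ℝ)) + (fderiv ℝ (fderiv ℝ (fderiv ℝ f)) X).flip w).flip v) X :=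
      (hstep2 w v).congr_of_eventuallyEq e
    have h4 := (hstep2 v w).unique hD1'
    have h5 := congrArg (fun (L : (Fin (n + 2) → ℝ) →L[ℝ] ℝ) => L u) h4
    simpa using h5
  have hsym3c : ∀ u w : (Fin (n + 2) → ℝ), fderiv ℝ (fderiv ℝ (fderiv ℝ f)) X u w X = fderiv ℝ (fderiv ℝ (fderiv ℝ f)) X X u w := by
    intro u w
    rw [hsym3b u w X, hsym3a u X]
  have hGder : ∀ Y ∈ Ω, HasFDerivAt F
      (c • (fderiv ℝ f) Y + (((fderiv ℝ f) Y).comp (ContinuousLinearMap.id ℝ (Fin (n + 2) → ℝ)) + ((fderiv ℝ (fderiv ℝ f)) Y).flip Y)) Y :=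
    fun Y hY => ((hd1 Y hY).const_mul c).add ((hd2 Y hY).clm_apply (hasFDerivAt_id Y))
  have hFd : ∀ᶠ Y in 𝓝 X, fderiv ℝ F Y
      = c • (fderiv ℝ f) Y + (((fderiv ℝ f) Y).comp (ContinuousLinearMap.id ℝ (Fin (n + 2) → ℝ)) + ((fderiv ℝ (fderiv ℝ f)) Y).flip Y) := by
    filter_upwards [hnh] with Y hY using (hGder Y hY).fderiv
  have key2 : ∀ u v : (Fin (n + 2) → ℝ), fderiv ℝ (fun Y => fderiv ℝ F Y u) X v
      = c * (fderiv ℝ (fderiv ℝ f)) X v u + (fderiv ℝ (fderiv ℝ f)) X v u + (fderiv ℝ (fderiv ℝ f)) X u v + (fderiv ℝ (fderiv ℝ (fderiv ℝ f))) X v u X := by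
    intro u v
    have e1 : (fun Y => fderiv ℝ F Y u) =ᶠ[𝓝 X]
        fun Y => c * (fderiv ℝ f) Y u + ((fderiv ℝ f) Y u + (fderiv ℝ (fderiv ℝ f)) Y u Y) := by
      filter_upwards [hFd] with Y hY
      rw [hY]
      simp
    rw [e1.fderiv_eq]
    have s3 : HasFDerivAt (fun Y => (fderiv ℝ (fderiv ℝ f)) Y u Y)
        (((fderiv ℝ (fderiv ℝ f)) X u).comp (ContinuousLinearMap.id ℝ (Fin (n + 2) → ℝ))
          + (((fderiv ℝ (fderiv ℝ f)) X).comp (0 : (Fin (n + 2) → ℝ) →L[ℝ] (Fin (n + 2) → ℝ)) + ((fderiv ℝ (fderiv ℝ (fderiv ℝ f))) X).flip u).flip X) X :=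
      (hd3.clm_apply (hasFDerivAt_const u X)).clm_apply (hasFDerivAt_id X)
    have hb : HasFDerivAt (fun Y => c * (fderiv ℝ f) Y u + ((fderiv ℝ f) Y u + (fderiv ℝ (fderiv ℝ f)) Y u Y))
        (c • (((fderiv ℝ f) X).comp (0 : (Fin (n + 2) → ℝ) →L[ℝ] (Fin (n + 2) → ℝ)) + ((fderiv ℝ (fderiv ℝ f)) X).flip u)
          + ((((fderiv ℝ f) X).comp (0 : (Fin (n + 2) → ℝ) →L[ℝ] (Fin (n + 2) → ℝ)) + ((fderiv ℝ (fderiv ℝ f)) X).flip u)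
            + (((fderiv ℝ (fderiv ℝ f)) X u).comp (ContinuousLinearMap.id ℝ (Fin (n + 2) → ℝ))
              + (((fderiv ℝ (fderiv ℝ f)) X).comp (0 : (Fin (n + 2) → ℝ) →L[ℝ] (Fin (n + 2) → ℝ)) + ((fderiv ℝ (fderiv ℝ (fderiv ℝ f))) X).flip u).flip X))) X :=
      ((hstep X hXΩ u).const_mul c).add ((hstep X hXΩ u).add s3)
    rw [hb.fderiv]
    simp
    ring
  have hambf : ∀ Y ∈ Ω, ambLap n f Y
      = 2 * (fderiv ℝ (fderiv ℝ f)) Y (basisVec n (infIdx n)) (basisVec n 0) + ∑ i : Fin n, (fderiv ℝ (fderiv ℝ f)) Y (basisVec n (mid n i)) (basisVec n (mid n i)) := by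
    intro Y hY
    have hv : ∀ u w : (Fin (n + 2) → ℝ), fderiv ℝ (fun Z => (fderiv ℝ f) Z u) Y w = (fderiv ℝ (fderiv ℝ f)) Y w u := by
      intro u w
      rw [(hstep Y hY u).fderiv]
      simp
    simp only [ambLap, hv]
  have hrmem : ∀ α ∈ Rplus, reflct n α X ∈ Ω := fun α hα => reflct_mem hR hP hα hX0 hXα
  have hT : ∀ α, α ∈ Rplus → ∃ D : (Fin (n + 2) → ℝ) →L[ℝ] ℝ,
      HasFDerivAt (fun Y => fderiv ℝ f Y α / Bform n α Y
          - (f Y - f (reflct n α Y)) / Bform n α Y ^ 2) D X ∧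
      D X = (((fderiv ℝ (fderiv ℝ f)) X X α - (fderiv ℝ f) X α) / Bform n α X - ((fderiv ℝ f) X X - (fderiv ℝ f) (reflct n α X) (reflct n α X) - 2 * (f X - f (reflct n α X))) / Bform n α X ^ 2) := by
    intro α hα
    have hbα := hXα α hα
    have hBd : HasFDerivAt (fun Y => Bform n α Y) (bl n α) X := by
      rw [← bl_coe]
      exact (bl n α).hasFDerivAt
    have hq1 := hasFDerivAt_div' (hstep X hXΩ α) hBd hbα
    have hrefl : HasFDerivAt (fun Y => f (reflct n α Y))
        (((fderiv ℝ f) (reflct n α X)).comp (rl n α)) X := by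
      have hmem2 : (rl n α) X ∈ Ω := by rw [rl_apply]; exact hrmem α hα
      have h := HasFDerivAt.comp X (hd1 _ hmem2) (rl n α).hasFDerivAt
      simpa [Function.comp_def, rl_apply] using h
    have hq2den : HasFDerivAt (fun Y => Bform n α Y ^ 2) ((2 * Bform n α X) • bl n α) X := by
      have h := hBd.mul hBd
      have e : (fun Y => Bform n α Y ^ 2) = fun Y => Bform n α Y * Bform n α Y :=
        funext fun Y => pow_two (Bform n α Y)
      rw [e]
      exact h.congr_fderiv (by rw [two_mul, add_smul])
    have hq2 := hasFDerivAt_div' ((hd1 X hXΩ).sub hrefl) hq2den (pow_ne_zero 2 hbα)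
    refine ⟨_, hq1.sub hq2, ?_⟩
    simp [bl_apply, rl_apply]
    field_simp
  choose Dk hDk hDkX using hT
  have hEamb : ∃ D : (Fin (n + 2) → ℝ) →L[ℝ] ℝ, HasFDerivAt (fun Y => ambLap n f Y) D X ∧
      D X = 2 * (fderiv ℝ (fderiv ℝ (fderiv ℝ f))) X X (basisVec n (infIdx n)) (basisVec n 0) + ∑ i : Fin n, (fderiv ℝ (fderiv ℝ (fderiv ℝ f))) X X (basisVec n (mid n i)) (basisVec n (mid n i)) := by
    refine ⟨(2:ℝ) • ((((fderiv ℝ (fderiv ℝ f)) X (basisVec n (infIdx n))).comp (0 : (Fin (n + 2) → ℝ) →L[ℝ] (Fin (n + 2) → ℝ)))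
          + (((fderiv ℝ (fderiv ℝ f)) X).comp (0 : (Fin (n + 2) → ℝ) →L[ℝ] (Fin (n + 2) → ℝ)) + ((fderiv ℝ (fderiv ℝ (fderiv ℝ f))) X).flip (basisVec n (infIdx n))).flip (basisVec n 0))
        + ∑ i : Fin n, ((((fderiv ℝ (fderiv ℝ f)) X (basisVec n (mid n i))).comp (0 : (Fin (n + 2) → ℝ) →L[ℝ] (Fin (n + 2) → ℝ)))
          + (((fderiv ℝ (fderiv ℝ f)) X).comp (0 : (Fin (n + 2) → ℝ) →L[ℝ] (Fin (n + 2) → ℝ)) + ((fderiv ℝ (fderiv ℝ (fderiv ℝ f))) X).flip (basisVec n (mid n i))).flip (basisVec n (mid n i))), ?_, ?_⟩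
    · have h := ((hstep2 (basisVec n (infIdx n)) (basisVec n 0)).const_mul (2:ℝ)).fun_add
        (HasFDerivAt.fun_sum (fun i (_ : i ∈ (Finset.univ : Finset (Fin n))) => hstep2 (basisVec n (mid n i)) (basisVec n (mid n i))))
      refine h.congr_of_eventuallyEq ?_
      filter_upwards [hnh] with Y hY using hambf Y hY
    · simp [ContinuousLinearMap.sum_apply]
  obtain ⟨Damb, hDamb, hDambX⟩ := hEamb
  have htot : HasFDerivAt (fun Y => dunklLap n Rplus k f Y)
      (Damb + (2:ℝ) • ∑ a ∈ Rplus.attach, k a.1 • Dk a.1 a.2) X := by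
    have hsum : HasFDerivAt
        (fun Y => ∑ a ∈ Rplus.attach, k a.1 * (fderiv ℝ f Y a.1 / Bform n a.1 Y
            - (f Y - f (reflct n a.1 Y)) / Bform n a.1 Y ^ 2))
        (∑ a ∈ Rplus.attach, k a.1 • Dk a.1 a.2) X :=
      HasFDerivAt.fun_sum fun a _ => (hDk a.1 a.2).const_mul (k a.1)
    have h := hDamb.fun_add (hsum.const_mul (2:ℝ))
    refine h.congr_of_eventuallyEq (Filter.Eventually.of_forall fun Y => ?_)
    simp only [dunklLap]
    congr 1
    congr 1
    exact (Finset.sum_attach _ _).symm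
  have hEterm : fderiv ℝ (fun Y => dunklLap n Rplus k f Y) X X
      = Damb X + 2 * ∑ α ∈ Rplus, k α * (((fderiv ℝ (fderiv ℝ f)) X X α - (fderiv ℝ f) X α) / Bform n α X - ((fderiv ℝ f) X X - (fderiv ℝ f) (reflct n α X) (reflct n α X) - 2 * (f X - f (reflct n α X))) / Bform n α X ^ 2) := by
    rw [htot.fderiv]
    simp only [ContinuousLinearMap.add_apply, ContinuousLinearMap.smul_apply,
      ContinuousLinearMap.sum_apply, smul_eq_mul, hDkX]
    exact congrArg (fun t => Damb X + 2 * t)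
      (Finset.sum_attach Rplus (fun α => k α * ((((fderiv ℝ (fderiv ℝ f)) X X α - (fderiv ℝ f) X α) / Bform n α X - ((fderiv ℝ f) X X - (fderiv ℝ f) (reflct n α X) (reflct n α X) - 2 * (f X - f (reflct n α X))) / Bform n α X ^ 2))))
  have hfinal : ∀ α ∈ Rplus,
      k α * (fderiv ℝ F X α / Bform n α X - (F X - F (reflct n α X)) / Bform n α X ^ 2)
        = c * (k α * (fderiv ℝ f X α / Bform n α X - (f X - f (reflct n α X)) / Bform n α X ^ 2)) + k α * (((fderiv ℝ (fderiv ℝ f)) X X α - (fderiv ℝ f) X α) / Bform n α X - ((fderiv ℝ f) X X - (fderiv ℝ f) (reflct n α X) (reflct n α X) - 2 * (f X - f (reflct n α X))) / Bform n α X ^ 2) + 2 * (k α * (fderiv ℝ f X α / Bform n α X - (f X - f (reflct n α X)) / Bform n α X ^ 2)) := by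
    intro α hα
    have hbα := hXα α hα
    rw [(hGder X hXΩ).fderiv]
    simp only [hFdef, ContinuousLinearMap.add_apply, ContinuousLinearMap.smul_apply,
      ContinuousLinearMap.comp_apply, ContinuousLinearMap.flip_apply,
      ContinuousLinearMap.coe_id', id_eq, smul_eq_mul]
    rw [hsym2 X hXΩ α X]
    field_simp
    ring
  have hambF : ambLap n F X = c * ambLap n f X + 2 * ambLap n f X + Damb X := by
    rw [hambf X hXΩ, hDambX]
    simp only [ambLap, key2]
    rw [hsym2 X hXΩ (basisVec n 0) (basisVec n (infIdx n))]
    simp only [hsym3c]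
    rw [Finset.sum_add_distrib, Finset.sum_add_distrib, Finset.sum_add_distrib,
      ← Finset.mul_sum]
    ring
  rw [hEterm]
  simp only [dunklLap]
  rw [hambF, Finset.sum_congr rfl hfinal, Finset.sum_add_distrib, Finset.sum_add_distrib,
    ← Finset.mul_sum, ← Finset.mul_sum]
  ring
end
end

section
/- Let R be a root system in (ℝ^{n+2}, B) with multiplicity function k, positive subsystem R_+, and γ_k = Σ_{α∈R_+} k(α), and let Ω := {X ∈ ℝ^{n+2} : X ≠ 0 and B(α,X) ≠ 0 for all α ∈ R_+}. Let j ≥ 1 be an integer, set w := −n/2 + j − γ_k and q(X) := B(X,X). Let g be a smooth function on Ω with g(λX) = λ^{w−2} g(X) for all λ > 0 and X ∈ Ω. Then the j-fold iterate Δ_k^j(q·g) is well defined on Ω (Δ_k maps smooth functions on Ω to smooth functions on Ω) and vanishes on the null cone: Δ_k^j(q·g)(X) = 0 for every X ∈ Ω with B(X,X) = 0. Consequently the restriction of Δ_k^j to w-homogeneous functions on the null cone is independent of the chosen extension off the cone. -/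
open scoped BigOperators
open Real

noncomputable section

namespace Aux

variable {n : ℕ}

/-! ### Algebra of the bilinear form -/

lemma Bform_symm (X Y : Fin (n+2) → ℝ) : Bform n X Y = Bform n Y X := by
  unfold Bform
  rw [Finset.sum_congr rfl (fun i _ => mul_comm (X (mid n i)) (Y (mid n i)))]
  ring

lemma Bform_add_right (X Y Z : Fin (n+2) → ℝ) :
    Bform n X (Y + Z) = Bform n X Y + Bform n X Z := by
  simp [Bform, mul_add, Finset.sum_add_distrib]; ring

lemma Bform_smul_right (c : ℝ) (X Y : Fin (n+2) → ℝ) :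
    Bform n X (c • Y) = c * Bform n X Y := by
  simp only [Bform, Pi.smul_apply, smul_eq_mul, Finset.mul_sum, mul_add]
  rw [Finset.sum_congr rfl (fun i (_: i ∈ Finset.univ) => by ring :
    ∀ i ∈ Finset.univ, X (mid n i) * (c * Y (mid n i)) = c * (X (mid n i) * Y (mid n i)))]
  ring

lemma Bform_sub_right (X Y Z : Fin (n+2) → ℝ) :
    Bform n X (Y - Z) = Bform n X Y - Bform n X Z := by
  simp [Bform, mul_sub, Finset.sum_sub_distrib]; ring

lemma Bform_neg_left (X Y : Fin (n+2) → ℝ) : Bform n (-X) Y = -Bform n X Y := by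
  simp [Bform, Finset.sum_neg_distrib]; ring

lemma Bform_smul_left (c : ℝ) (X Y : Fin (n+2) → ℝ) :
    Bform n (c • X) Y = c * Bform n X Y := by
  rw [Bform_symm, Bform_smul_right, Bform_symm]

lemma Bform_sub_left (X Y Z : Fin (n+2) → ℝ) :
    Bform n (X - Y) Z = Bform n X Z - Bform n Y Z := by
  rw [Bform_symm, Bform_sub_right, Bform_symm X Z, Bform_symm Y Z]

lemma Bform_reflct (α X Y : Fin (n+2) → ℝ) :
    Bform n (reflct n α X) Y = Bform n X (reflct n α Y) := by
  unfold reflct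
  rw [Bform_sub_left, Bform_sub_right, Bform_smul_left, Bform_smul_right,
    Bform_symm α Y, Bform_symm X α]
  ring

lemma reflct_invol (α X : Fin (n+2) → ℝ) (hα : Bform n α α ≠ 0) :
    reflct n α (reflct n α X) = X := by
  unfold reflct
  rw [Bform_sub_right, Bform_smul_right]
  have : Bform n α X - 2 * Bform n α X / Bform n α α * Bform n α α = -Bform n α X := by
    field_simp; ring
  rw [this]
  ext i; simp; ring

lemma q_reflct (α X : Fin (n+2) → ℝ) (hα : Bform n α α ≠ 0) :
    Bform n (reflct n α X) (reflct n α X) = Bform n X X := by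
  unfold reflct
  rw [Bform_sub_left, Bform_sub_right, Bform_sub_right, Bform_smul_left,
    Bform_smul_right, Bform_smul_right, Bform_smul_left, Bform_symm α X]
  field_simp; ring

lemma reflct_smul (α X : Fin (n+2) → ℝ) (l : ℝ) :
    reflct n α (l • X) = l • reflct n α X := by
  unfold reflct
  rw [Bform_smul_right]
  ext i; simp; ring

lemma Bform_zero_right (α : Fin (n+2) → ℝ) : Bform n α (0 : Fin (n+2) → ℝ) = 0 := by
  simp [Bform]

lemma reflct_zero (α : Fin (n+2) → ℝ) : reflct n α (0 : Fin (n+2) → ℝ) = 0 := by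
  unfold reflct
  rw [Bform_zero_right]
  ext i; simp

/-! ### Continuous linear maps -/

def Bclm (n : ℕ) (α : Fin (n+2) → ℝ) : (Fin (n+2) → ℝ) →L[ℝ] ℝ :=
  (α 0) • ContinuousLinearMap.proj (infIdx n) + (α (infIdx n)) • ContinuousLinearMap.proj 0
    + ∑ i : Fin n, (α (mid n i)) • ContinuousLinearMap.proj (mid n i)

@[simp] lemma Bclm_apply (α v : Fin (n+2) → ℝ) : Bclm n α v = Bform n α v := by
  simp [Bclm, Bform, ContinuousLinearMap.sum_apply, mul_comm]

def reflctL (n : ℕ) (α : Fin (n+2) → ℝ) : (Fin (n+2) → ℝ) →L[ℝ] (Fin (n+2) → ℝ) :=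
  ContinuousLinearMap.id ℝ _ - (2 / Bform n α α) • (Bclm n α).smulRight α

lemma reflctL_apply (α X : Fin (n+2) → ℝ) : reflctL n α X = reflct n α X := by
  unfold reflctL reflct
  ext i
  simp [ContinuousLinearMap.smulRight_apply]
  ring

lemma hasFDerivAt_Bform_right (α X : Fin (n+2) → ℝ) :
    HasFDerivAt (fun Y => Bform n α Y) (Bclm n α) X := by
  have : (fun Y => Bform n α Y) = ⇑(Bclm n α) := by funext Y; simp
  rw [this]; exact (Bclm n α).hasFDerivAt

lemma mid_injective : Function.Injective (mid n) := fun i j h => by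
  simpa [mid, Fin.ext_iff] using h
lemma mid_ne_zero (i : Fin n) : mid n i ≠ 0 := by simp [mid, Fin.ext_iff]
lemma mid_ne_inf (i : Fin n) : mid n i ≠ infIdx n := by
  simp [mid, infIdx, Fin.ext_iff]; omega
lemma zero_ne_inf : (0 : Fin (n+2)) ≠ infIdx n := by
  simp [infIdx, Fin.ext_iff]

@[simp] lemma Bform_basis_zero (X : Fin (n+2) → ℝ) :
    Bform n (basisVec n 0) X = X (infIdx n) := by
  simp [Bform, basisVec, Pi.single_apply, zero_ne_inf, fun i => (mid_ne_zero (n:=n) i).symm]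

@[simp] lemma Bform_basis_inf (X : Fin (n+2) → ℝ) :
    Bform n (basisVec n (infIdx n)) X = X 0 := by
  simp [Bform, basisVec, Pi.single_apply, (zero_ne_inf (n:=n)).symm,
    fun i => (mid_ne_inf (n:=n) i).symm]

@[simp] lemma Bform_basis_mid (i : Fin n) (X : Fin (n+2) → ℝ) :
    Bform n (basisVec n (mid n i)) X = X (mid n i) := by
  have h0 : basisVec n (mid n i) 0 = 0 := by
    simp [basisVec, Pi.single_apply, (mid_ne_zero (n:=n) i)]
  have hinf : basisVec n (mid n i) (infIdx n) = 0 := by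
    simp [basisVec, Pi.single_apply, (mid_ne_inf (n:=n) i)]
  have hsum : ∀ j : Fin n, basisVec n (mid n i) (mid n j) = if i = j then 1 else 0 := by
    intro j
    simp [basisVec, Pi.single_apply, mid_injective.eq_iff, eq_comm]
  simp [Bform, h0, hinf, hsum, ite_mul, Finset.sum_ite_eq]

def P (n : ℕ) (a : Fin (n+2)) : (Fin (n+2) → ℝ) →L[ℝ] ℝ :=
  ContinuousLinearMap.proj (R := ℝ) (φ := fun _ : Fin (n+2) => ℝ) a

lemma hasFDerivAt_proj (a : Fin (n+2)) (X : Fin (n+2) → ℝ) :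
    HasFDerivAt (fun Y : Fin (n+2) → ℝ => Y a)
      (P n a) X := (P n a).hasFDerivAt

lemma hasFDerivAt_q (X : Fin (n+2) → ℝ) :
    HasFDerivAt (fun Y => Bform n Y Y) ((2:ℝ) • Bclm n X) X := by
  have h : HasFDerivAt (fun Y : Fin (n+2) → ℝ =>
      Y 0 * Y (infIdx n) + Y (infIdx n) * Y 0 + ∑ i : Fin n, Y (mid n i) * Y (mid n i))
      (((X 0 • P n (infIdx n) + X (infIdx n) • P n 0)
        + (X (infIdx n) • P n 0 + X 0 • P n (infIdx n)))
        + ∑ i : Fin n, (X (mid n i) • P n (mid n i)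
            + X (mid n i) • P n (mid n i))) X := by
    exact (((hasFDerivAt_proj 0 X).mul (hasFDerivAt_proj (infIdx n) X)).add
      ((hasFDerivAt_proj (infIdx n) X).mul (hasFDerivAt_proj 0 X))).add
      (HasFDerivAt.fun_sum fun i _ => (hasFDerivAt_proj (mid n i) X).mul (hasFDerivAt_proj (mid n i) X))
  have heq : (fun Y : Fin (n+2) → ℝ => Bform n Y Y) = fun Y =>
      Y 0 * Y (infIdx n) + Y (infIdx n) * Y 0 + ∑ i : Fin n, Y (mid n i) * Y (mid n i) := rfl
  rw [heq]
  convert h using 1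
  ext v
  simp [Bclm, P, ContinuousLinearMap.sum_apply, Finset.sum_add_distrib, Bform, Finset.mul_sum,
    Finset.sum_mul]
  ring_nf
  rw [Finset.sum_mul]

lemma contDiff_q : ContDiff ℝ (⊤ : ℕ∞) (fun Y : Fin (n+2) → ℝ => Bform n Y Y) := by
  unfold Bform
  apply ContDiff.add
  apply ContDiff.add
  · exact ((contDiff_apply ℝ ℝ 0).mul (contDiff_apply ℝ ℝ (infIdx n)))
  · exact ((contDiff_apply ℝ ℝ (infIdx n)).mul (contDiff_apply ℝ ℝ 0))
  · exact ContDiff.sum fun i _ =>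
      ((contDiff_apply ℝ ℝ (mid n i)).mul (contDiff_apply ℝ ℝ (mid n i)))

lemma clm_decomp (L : (Fin (n+2) → ℝ) →L[ℝ] ℝ) (X : Fin (n+2) → ℝ) :
    L X = X 0 * L (basisVec n 0) + X (infIdx n) * L (basisVec n (infIdx n))
      + ∑ i : Fin n, X (mid n i) * L (basisVec n (mid n i)) := by
  have hX : X = ∑ j : Fin (n+2), X j • basisVec n j := by
    funext a
    rw [Finset.sum_apply]
    simp [basisVec, Pi.single_apply, Finset.sum_ite_eq, mul_comm]
  calc L X = ∑ j : Fin (n+2), X j * L (basisVec n j) := by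
        conv_lhs => rw [hX]
        rw [map_sum]
        exact Finset.sum_congr rfl fun j _ => by rw [L.map_smul]; rfl
    _ = _ := by
        rw [Fin.sum_univ_succ, Fin.sum_univ_castSucc]
        have h1 : ∀ i : Fin n, (i.castSucc).succ = mid n i := fun i => Fin.succ_castSucc i
        have h2 : (Fin.last n).succ = infIdx n := rfl
        simp only [h2]
        rw [Finset.sum_congr rfl (fun i _ => by rw [h1 i])]
        ring

/-! ### Differentiability toolkit -/

section Tools
variable {Om : Set (Fin (n+2) → ℝ)}

lemma diffAt (hOm : IsOpen Om) {f : (Fin (n+2) → ℝ) → ℝ} {X : Fin (n+2) → ℝ}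
    (hf : ContDiffOn ℝ (⊤:ℕ∞) f Om) (hX : X ∈ Om) : DifferentiableAt ℝ f X :=
  (hf.differentiableOn (by simp)).differentiableAt (hOm.mem_nhds hX)

lemma contDiffOn_fderiv_apply (hOm : IsOpen Om) {f : (Fin (n+2) → ℝ) → ℝ}
    (hf : ContDiffOn ℝ (⊤:ℕ∞) f Om) (v : Fin (n+2) → ℝ) :
    ContDiffOn ℝ (⊤:ℕ∞) (fun Y => fderiv ℝ f Y v) Om := by
  have h1 : ContDiffOn ℝ (⊤:ℕ∞) (fderiv ℝ f) Om :=
    hf.fderiv_of_isOpen hOm (by exact_mod_cast le_top)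
  exact (ContinuousLinearMap.apply ℝ ℝ v).contDiff.comp_contDiffOn h1

lemma eventuallyEq_of_eqOn (hOm : IsOpen Om) {u v : (Fin (n+2) → ℝ) → ℝ}
    {X : Fin (n+2) → ℝ} (huv : ∀ Y ∈ Om, u Y = v Y) (hX : X ∈ Om) :
    u =ᶠ[nhds X] v :=
  Filter.eventually_of_mem (hOm.mem_nhds hX) huv

lemma fderiv_congr_on (hOm : IsOpen Om) {u v : (Fin (n+2) → ℝ) → ℝ}
    {X : Fin (n+2) → ℝ} (huv : ∀ Y ∈ Om, u Y = v Y) (hX : X ∈ Om) :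
    fderiv ℝ u X = fderiv ℝ v X :=
  (eventuallyEq_of_eqOn hOm huv hX).fderiv_eq

lemma fderiv2_congr_on (hOm : IsOpen Om) {u v : (Fin (n+2) → ℝ) → ℝ}
    {X : Fin (n+2) → ℝ} (huv : ∀ Y ∈ Om, u Y = v Y) (hX : X ∈ Om) (a b : Fin (n+2) → ℝ) :
    fderiv ℝ (fun Y => fderiv ℝ u Y b) X a = fderiv ℝ (fun Y => fderiv ℝ v Y b) X a := by
  have h : ∀ Y ∈ Om, fderiv ℝ u Y b = fderiv ℝ v Y b := fun Y hY => by
    rw [fderiv_congr_on hOm huv hY]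
  rw [fderiv_congr_on hOm h hX]

lemma ambLap_congr_on (hOm : IsOpen Om) {u v : (Fin (n+2) → ℝ) → ℝ}
    {X : Fin (n+2) → ℝ} (huv : ∀ Y ∈ Om, u Y = v Y) (hX : X ∈ Om) :
    ambLap n u X = ambLap n v X := by
  unfold ambLap
  rw [fderiv2_congr_on hOm huv hX]
  congr 1
  exact Finset.sum_congr rfl fun i _ => fderiv2_congr_on hOm huv hX _ _

variable {Rplus : Finset (Fin (n+2) → ℝ)} {k : (Fin (n+2) → ℝ) → ℝ}

lemma dunklLap_congr_on (hOm : IsOpen Om)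
    (hrefl : ∀ α ∈ Rplus, ∀ X ∈ Om, reflct n α X ∈ Om)
    {u v : (Fin (n+2) → ℝ) → ℝ}
    {X : Fin (n+2) → ℝ} (huv : ∀ Y ∈ Om, u Y = v Y) (hX : X ∈ Om) :
    dunklLap n Rplus k u X = dunklLap n Rplus k v X := by
  unfold dunklLap
  rw [ambLap_congr_on hOm huv hX]
  congr 2
  refine Finset.sum_congr rfl fun α hα => ?_
  rw [fderiv_congr_on hOm huv hX, huv X hX, huv _ (hrefl α hα X hX)]

lemma contDiffOn_dunklLap (hOm : IsOpen Om)
    (hrefl : ∀ α ∈ Rplus, ∀ X ∈ Om, reflct n α X ∈ Om)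
    (hB : ∀ α ∈ Rplus, ∀ X ∈ Om, Bform n α X ≠ 0)
    {f : (Fin (n+2) → ℝ) → ℝ} (hf : ContDiffOn ℝ (⊤:ℕ∞) f Om) :
    ContDiffOn ℝ (⊤:ℕ∞) (dunklLap n Rplus k f) Om := by
  have hBc : ∀ α, ContDiffOn ℝ (⊤:ℕ∞) (fun Y => Bform n α Y) Om := fun α =>
    ((Bclm n α).contDiff.contDiffOn).congr (fun Y _ => (Bclm_apply α Y).symm) |>.congr
      (fun Y _ => rfl)
  have hcomp : ∀ α ∈ Rplus, ContDiffOn ℝ (⊤:ℕ∞) (fun Y => f (reflct n α Y)) Om := by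
    intro α hα
    have : ContDiffOn ℝ (⊤:ℕ∞) (f ∘ ⇑(reflctL n α)) Om := by
      apply hf.comp ((reflctL n α).contDiff.contDiffOn)
      intro X hX
      rw [reflctL_apply]
      exact hrefl α hα X hX
    exact this.congr fun Y _ => by simp [Function.comp, reflctL_apply]
  unfold dunklLap ambLap
  apply ContDiffOn.add
  · apply ContDiffOn.add
    · exact contDiffOn_const.mul (contDiffOn_fderiv_apply hOm
        (contDiffOn_fderiv_apply hOm hf (basisVec n 0)) (basisVec n (infIdx n)))
    · exact ContDiffOn.sum fun i _ => contDiffOn_fderiv_apply hOm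
        (contDiffOn_fderiv_apply hOm hf (basisVec n (mid n i))) (basisVec n (mid n i))
  · refine contDiffOn_const.mul (ContDiffOn.sum fun α hα => contDiffOn_const.mul ?_)
    apply ContDiffOn.sub
    · exact (contDiffOn_fderiv_apply hOm hf α).div (hBc α) (fun X hX => hB α hα X hX)
    · exact ((hf.sub (hcomp α hα)).div ((hBc α).pow 2)
        (fun X hX => pow_ne_zero 2 (hB α hα X hX)))

/-! ### Linearity, Euler identity, homogeneity -/

lemma fderiv_lin (hOm : IsOpen Om) {u v : (Fin (n+2) → ℝ) → ℝ} (c : ℝ)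
    (hu : ContDiffOn ℝ (⊤:ℕ∞) u Om) (hv : ContDiffOn ℝ (⊤:ℕ∞) v Om)
    {Y : Fin (n+2) → ℝ} (hY : Y ∈ Om) (b : Fin (n+2) → ℝ) :
    fderiv ℝ (fun Z => u Z + c * v Z) Y b = fderiv ℝ u Y b + c * fderiv ℝ v Y b := by
  rw [fderiv_fun_add (diffAt hOm hu hY) ((diffAt hOm hv hY).const_mul c),
    fderiv_const_mul (diffAt hOm hv hY) c]
  simp

lemma fderiv2_lin (hOm : IsOpen Om) {u v : (Fin (n+2) → ℝ) → ℝ} (c : ℝ)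
    (hu : ContDiffOn ℝ (⊤:ℕ∞) u Om) (hv : ContDiffOn ℝ (⊤:ℕ∞) v Om)
    {X : Fin (n+2) → ℝ} (hX : X ∈ Om) (a b : Fin (n+2) → ℝ) :
    fderiv ℝ (fun Y => fderiv ℝ (fun Z => u Z + c * v Z) Y b) X a
      = fderiv ℝ (fun Y => fderiv ℝ u Y b) X a + c * fderiv ℝ (fun Y => fderiv ℝ v Y b) X a := by
  have h1 : ∀ Y ∈ Om, fderiv ℝ (fun Z => u Z + c * v Z) Y b
      = (fun Z => fderiv ℝ u Z b + c * fderiv ℝ v Z b) Y := fun Y hY =>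
    fderiv_lin hOm c hu hv hY b
  rw [fderiv_congr_on hOm h1 hX]
  exact fderiv_lin hOm c (contDiffOn_fderiv_apply hOm hu b) (contDiffOn_fderiv_apply hOm hv b)
    hX a

lemma dunklLap_lin (hOm : IsOpen Om) {u v : (Fin (n+2) → ℝ) → ℝ} (c : ℝ)
    (hu : ContDiffOn ℝ (⊤:ℕ∞) u Om) (hv : ContDiffOn ℝ (⊤:ℕ∞) v Om)
    {X : Fin (n+2) → ℝ} (hX : X ∈ Om) :
    dunklLap n Rplus k (fun Z => u Z + c * v Z) X
      = dunklLap n Rplus k u X + c * dunklLap n Rplus k v X := by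
  have hAmb : ambLap n (fun Z => u Z + c * v Z) X = ambLap n u X + c * ambLap n v X := by
    unfold ambLap
    rw [fderiv2_lin hOm c hu hv hX,
      Finset.sum_congr rfl (fun i (_ : i ∈ Finset.univ) =>
        fderiv2_lin hOm c hu hv hX (basisVec n (mid n i)) (basisVec n (mid n i))),
      Finset.sum_add_distrib, ← Finset.mul_sum]
    ring
  have hDun : ∀ α ∈ Rplus,
      k α * (fderiv ℝ (fun Z => u Z + c * v Z) X α / Bform n α X
        - ((u X + c * v X) - (u (reflct n α X) + c * v (reflct n α X))) / (Bform n α X) ^ 2)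
      = k α * (fderiv ℝ u X α / Bform n α X - (u X - u (reflct n α X)) / (Bform n α X) ^ 2)
        + c * (k α * (fderiv ℝ v X α / Bform n α X
            - (v X - v (reflct n α X)) / (Bform n α X) ^ 2)) := by
    intro α _
    rw [fderiv_lin hOm c hu hv hX α]
    ring
  unfold dunklLap
  rw [hAmb, Finset.sum_congr rfl hDun, Finset.sum_add_distrib, ← Finset.mul_sum]
  ring

lemma euler (hOm : IsOpen Om)
    {f : (Fin (n+2) → ℝ) → ℝ} {d : ℝ}
    (hf : ContDiffOn ℝ (⊤:ℕ∞) f Om)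
    (hhom : ∀ l : ℝ, 0 < l → ∀ X ∈ Om, f (l • X) = l ^ d * f X)
    {X : Fin (n+2) → ℝ} (hX : X ∈ Om) :
    fderiv ℝ f X X = d * f X := by
  have hc : HasDerivAt (fun t : ℝ => t • X) X 1 := by
    simpa using (hasDerivAt_id (1:ℝ)).smul_const X
  have h1 : HasDerivAt (fun t : ℝ => f (t • X)) (fderiv ℝ f X X) 1 := by
    have hf1 : HasFDerivAt f (fderiv ℝ f X) ((1:ℝ) • X) := by
      rw [one_smul]; exact (diffAt hOm hf hX).hasFDerivAt
    have := hf1.comp_hasDerivAt 1 hc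
    exact this
  have h2 : HasDerivAt (fun t : ℝ => t ^ d * f X) (d * f X) 1 := by
    have := (Real.hasDerivAt_rpow_const (x := (1:ℝ)) (p := d)
      (Or.inl one_ne_zero)).mul_const (f X)
    simpa using this
  have heq : (fun t : ℝ => f (t • X)) =ᶠ[nhds 1] (fun t : ℝ => t ^ d * f X) := by
    have hpos : ∀ᶠ t : ℝ in nhds 1, 0 < t :=
      Filter.Tendsto.eventually_const_lt (by norm_num) Filter.tendsto_id
    exact hpos.mono fun t ht => hhom t ht X hX
  have h1' : HasDerivAt (fun t : ℝ => t ^ d * f X) (fderiv ℝ f X X) 1 :=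
    h1.congr_of_eventuallyEq heq.symm
  exact h1'.unique h2

lemma fderiv_homog (hOm : IsOpen Om)
    (hsmul : ∀ l : ℝ, 0 < l → ∀ X ∈ Om, l • X ∈ Om)
    {f : (Fin (n+2) → ℝ) → ℝ} {d : ℝ}
    (hf : ContDiffOn ℝ (⊤:ℕ∞) f Om)
    (hhom : ∀ l : ℝ, 0 < l → ∀ X ∈ Om, f (l • X) = l ^ d * f X)
    {l : ℝ} (hl : 0 < l) {X : Fin (n+2) → ℝ} (hX : X ∈ Om) (v : Fin (n+2) → ℝ) :
    fderiv ℝ f (l • X) v = l ^ (d - 1) * fderiv ℝ f X v := by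
  have hlne : l ≠ 0 := ne_of_gt hl
  have hsmF : (fun Y : Fin (n+2) → ℝ => l • Y)
      = ⇑(l • ContinuousLinearMap.id ℝ (Fin (n+2) → ℝ)) := by
    funext Y; simp
  have hsm : HasFDerivAt (fun Y : Fin (n+2) → ℝ => l • Y)
      (l • ContinuousLinearMap.id ℝ (Fin (n+2) → ℝ)) X := by
    rw [hsmF]; exact (l • ContinuousLinearMap.id ℝ (Fin (n+2) → ℝ)).hasFDerivAt
  have hcomp : HasFDerivAt (fun Y : Fin (n+2) → ℝ => f (l • Y))
      ((fderiv ℝ f (l • X)).comp (l • ContinuousLinearMap.id ℝ (Fin (n+2) → ℝ))) X :=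
    ((diffAt hOm hf (hsmul l hl X hX)).hasFDerivAt).comp X hsm
  have hconst : HasFDerivAt (fun Y : Fin (n+2) → ℝ => l ^ d * f Y)
      (l ^ d • fderiv ℝ f X) X := ((diffAt hOm hf hX).hasFDerivAt).const_mul (l ^ d)
  have e3 : fderiv ℝ (fun Y : Fin (n+2) → ℝ => f (l • Y)) X
      = fderiv ℝ (fun Y : Fin (n+2) → ℝ => l ^ d * f Y) X :=
    fderiv_congr_on hOm (fun Y hY => hhom l hl Y hY) hX
  have e4 := congrArg (fun (L : (Fin (n+2) → ℝ) →L[ℝ] ℝ) => L v)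
    (hcomp.fderiv.symm.trans (e3.trans hconst.fderiv))
  simp only [ContinuousLinearMap.coe_comp', Function.comp_apply,
    ContinuousLinearMap.coe_smul', Pi.smul_apply, ContinuousLinearMap.coe_id', id_eq,
    ContinuousLinearMap.smul_apply, map_smul, smul_eq_mul] at e4
  have hpow : l ^ (d - 1) * l = l ^ d := by
    rw [← Real.rpow_add_one hlne (d - 1)]; ring_nf
  apply mul_left_cancel₀ hlne
  rw [e4, ← hpow]
  ring

lemma dunklLap_homog (hOm : IsOpen Om)
    (hsmul : ∀ l : ℝ, 0 < l → ∀ X ∈ Om, l • X ∈ Om)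
    (hrefl : ∀ α ∈ Rplus, ∀ X ∈ Om, reflct n α X ∈ Om)
    (hB : ∀ α ∈ Rplus, ∀ X ∈ Om, Bform n α X ≠ 0)
    {f : (Fin (n+2) → ℝ) → ℝ} {d : ℝ}
    (hf : ContDiffOn ℝ (⊤:ℕ∞) f Om)
    (hhom : ∀ l : ℝ, 0 < l → ∀ X ∈ Om, f (l • X) = l ^ d * f X)
    {l : ℝ} (hl : 0 < l) {X : Fin (n+2) → ℝ} (hX : X ∈ Om) :
    dunklLap n Rplus k f (l • X) = l ^ (d - 2) * dunklLap n Rplus k f X := by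
  have hlne : l ≠ 0 := ne_of_gt hl
  have hFhom : ∀ (v : Fin (n+2) → ℝ), ∀ l' : ℝ, 0 < l' → ∀ Y ∈ Om,
      fderiv ℝ f (l' • Y) v = l' ^ (d-1) * fderiv ℝ f Y v :=
    fun v l' hl' Y hY => fderiv_homog hOm hsmul hf hhom hl' hY v
  have h2 : ∀ a b : Fin (n+2) → ℝ, fderiv ℝ (fun Y => fderiv ℝ f Y b) (l • X) a
      = l ^ (d - 2) * fderiv ℝ (fun Y => fderiv ℝ f Y b) X a := by
    intro a b
    have := fderiv_homog hOm hsmul (contDiffOn_fderiv_apply hOm hf b)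
      (fun l' hl' Y hY => hFhom b l' hl' Y hY) hl hX a
    rw [show d - 1 - 1 = d - 2 by ring] at this
    exact this
  have hamb : ambLap n f (l • X) = l ^ (d-2) * ambLap n f X := by
    unfold ambLap
    rw [h2, Finset.sum_congr rfl (fun i (_ : i ∈ Finset.univ) => h2 _ _), ← Finset.mul_sum]
    ring
  have hterm : ∀ α ∈ Rplus,
      k α * (fderiv ℝ f (l • X) α / Bform n α (l • X)
        - (f (l • X) - f (reflct n α (l • X))) / (Bform n α (l • X)) ^ 2)
      = l ^ (d-2) * (k α * (fderiv ℝ f X α / Bform n α X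
          - (f X - f (reflct n α X)) / (Bform n α X) ^ 2)) := by
    intro α hα
    rw [Bform_smul_right, reflct_smul, hhom l hl X hX, hhom l hl _ (hrefl α hα X hX),
      hFhom α l hl X hX]
    have hBne := hB α hα X hX
    have e1 : l ^ (d-1) = l ^ (d-2) * l := by rw [← Real.rpow_add_one hlne (d-2)]; ring_nf
    have e2 : l ^ d = l ^ (d-2) * l ^ (2:ℕ) := by
      rw [← Real.rpow_natCast l 2, ← Real.rpow_add hl]; norm_num
    rw [e1, e2]
    field_simp
  unfold dunklLap
  rw [hamb, Finset.sum_congr rfl hterm, ← Finset.mul_sum]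
  ring

/-! ### Product identities -/

lemma fderiv_qmul (hOm : IsOpen Om) {f : (Fin (n+2) → ℝ) → ℝ}
    (hf : ContDiffOn ℝ (⊤:ℕ∞) f Om) {Y : Fin (n+2) → ℝ} (hY : Y ∈ Om) (b : Fin (n+2) → ℝ) :
    fderiv ℝ (fun Z => Bform n Z Z * f Z) Y b
      = Bform n Y Y * fderiv ℝ f Y b + 2 * Bform n Y b * f Y := by
  have h := (hasFDerivAt_q Y).fun_mul ((diffAt hOm hf hY).hasFDerivAt)
  rw [h.fderiv]
  simp [Bclm_apply]
  ring

lemma fderiv2_qmul (hOm : IsOpen Om) {f : (Fin (n+2) → ℝ) → ℝ}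
    (hf : ContDiffOn ℝ (⊤:ℕ∞) f Om) {X : Fin (n+2) → ℝ} (hX : X ∈ Om) (a b : Fin (n+2) → ℝ) :
    fderiv ℝ (fun Y => fderiv ℝ (fun Z => Bform n Z Z * f Z) Y b) X a
      = Bform n X X * fderiv ℝ (fun Y => fderiv ℝ f Y b) X a
        + 2 * Bform n X a * fderiv ℝ f X b + 2 * Bform n X b * fderiv ℝ f X a
        + 2 * Bform n b a * f X := by
  have hcongr : ∀ Y ∈ Om, fderiv ℝ (fun Z => Bform n Z Z * f Z) Y b
      = (fun Z => Bform n Z Z * fderiv ℝ f Z b + 2 * Bform n Z b * f Z) Y := fun Y hY =>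
    fderiv_qmul hOm hf hY b
  rw [fderiv_congr_on hOm hcongr hX]
  have hF : DifferentiableAt ℝ (fun Z => fderiv ℝ f Z b) X :=
    diffAt hOm (contDiffOn_fderiv_apply hOm hf b) hX
  have h1 : HasFDerivAt (fun Z => Bform n Z Z * fderiv ℝ f Z b)
      (Bform n X X • (fderiv ℝ (fun Z => fderiv ℝ f Z b) X)
        + fderiv ℝ f X b • ((2:ℝ) • Bclm n X)) X :=
    (hasFDerivAt_q X).mul hF.hasFDerivAt
  have hc : HasFDerivAt (fun Z : Fin (n+2) → ℝ => 2 * Bform n Z b)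
      ((2:ℝ) • Bclm n b) X := by
    have := ((hasFDerivAt_Bform_right b X).const_mul (2:ℝ))
    refine HasFDerivAt.congr_of_eventuallyEq this ?_
    filter_upwards with Z
    rw [Bform_symm Z b]
  have h2 : HasFDerivAt (fun Z : Fin (n+2) → ℝ => 2 * Bform n Z b * f Z)
      ((2 * Bform n X b) • fderiv ℝ f X + f X • ((2:ℝ) • Bclm n b)) X :=
    hc.mul (diffAt hOm hf hX).hasFDerivAt
  have h := h1.fun_add h2
  rw [h.fderiv]
  simp [Bclm_apply]
  rw [Bform_symm X b, Bform_symm b a]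
  ring

lemma ambLap_qmul (hOm : IsOpen Om) {f : (Fin (n+2) → ℝ) → ℝ}
    (hf : ContDiffOn ℝ (⊤:ℕ∞) f Om) {X : Fin (n+2) → ℝ} (hX : X ∈ Om) :
    ambLap n (fun Z => Bform n Z Z * f Z) X
      = Bform n X X * ambLap n f X + (2*(n:ℝ)+4) * f X + 4 * fderiv ℝ f X X := by
  have hv1 : Bform n X (basisVec n (infIdx n)) = X 0 := by
    rw [Bform_symm, Bform_basis_inf]
  have hv2 : Bform n X (basisVec n 0) = X (infIdx n) := by
    rw [Bform_symm, Bform_basis_zero]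
  have hv3 : ∀ i : Fin n, Bform n X (basisVec n (mid n i)) = X (mid n i) := fun i => by
    rw [Bform_symm, Bform_basis_mid]
  have hv4 : Bform n (basisVec n 0) (basisVec n (infIdx n)) = 1 := by
    rw [Bform_basis_zero]; simp [basisVec]
  have hv5 : ∀ i : Fin n, Bform n (basisVec n (mid n i)) (basisVec n (mid n i)) = 1 :=
    fun i => by rw [Bform_basis_mid]; simp [basisVec]
  unfold ambLap
  rw [fderiv2_qmul hOm hf hX (basisVec n (infIdx n)) (basisVec n 0),
    Finset.sum_congr rfl (fun i (_ : i ∈ Finset.univ) => by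
      rw [fderiv2_qmul hOm hf hX (basisVec n (mid n i)) (basisVec n (mid n i)),
        hv3 i, hv5 i]
      ring :
      ∀ i ∈ Finset.univ,
        fderiv ℝ (fun Y => fderiv ℝ (fun Z => Bform n Z Z * f Z) Y (basisVec n (mid n i))) X
            (basisVec n (mid n i))
        = Bform n X X * fderiv ℝ (fun Y => fderiv ℝ f Y (basisVec n (mid n i))) X
            (basisVec n (mid n i))
          + 4 * (X (mid n i) * fderiv ℝ f X (basisVec n (mid n i))) + 2 * f X),
    hv1, hv2, hv4]
  rw [Finset.sum_add_distrib, Finset.sum_add_distrib, ← Finset.mul_sum, ← Finset.mul_sum,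
    Finset.sum_const, Finset.card_univ, Fintype.card_fin,
    clm_decomp (fderiv ℝ f X) X]
  simp only [nsmul_eq_mul]
  ring

lemma dunklLap_qmul (hOm : IsOpen Om)
    (hrefl : ∀ α ∈ Rplus, ∀ X ∈ Om, reflct n α X ∈ Om)
    (hB : ∀ α ∈ Rplus, ∀ X ∈ Om, Bform n α X ≠ 0)
    (hAA : ∀ α ∈ Rplus, Bform n α α ≠ 0)
    {f : (Fin (n+2) → ℝ) → ℝ}
    (hf : ContDiffOn ℝ (⊤:ℕ∞) f Om) {X : Fin (n+2) → ℝ} (hX : X ∈ Om) :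
    dunklLap n Rplus k (fun Z => Bform n Z Z * f Z) X
      = Bform n X X * dunklLap n Rplus k f X
        + (2*(n:ℝ) + 4 + 4 * ∑ α ∈ Rplus, k α) * f X + 4 * fderiv ℝ f X X := by
  have hterm : ∀ α ∈ Rplus,
      k α * (fderiv ℝ (fun Z => Bform n Z Z * f Z) X α / Bform n α X
        - ((fun Z => Bform n Z Z * f Z) X - (fun Z => Bform n Z Z * f Z) (reflct n α X))
            / (Bform n α X) ^ 2)
      = 2 * (k α * f X) + Bform n X X * (k α * (fderiv ℝ f X α / Bform n α X
          - (f X - f (reflct n α X)) / (Bform n α X) ^ 2)) := by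
    intro α hα
    have hBne := hB α hα X hX
    simp only []
    rw [fderiv_qmul hOm hf hX α, q_reflct α X (hAA α hα), Bform_symm X α]
    field_simp
    ring
  unfold dunklLap
  rw [ambLap_qmul hOm hf hX, Finset.sum_congr rfl hterm, Finset.sum_add_distrib,
    ← Finset.mul_sum, ← Finset.mul_sum, ← Finset.sum_mul]
  ring

/-! ### Iterates -/

lemma iter_smooth (hOm : IsOpen Om)
    (hrefl : ∀ α ∈ Rplus, ∀ X ∈ Om, reflct n α X ∈ Om)
    (hB : ∀ α ∈ Rplus, ∀ X ∈ Om, Bform n α X ≠ 0)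
    {f : (Fin (n+2) → ℝ) → ℝ} (hf : ContDiffOn ℝ (⊤:ℕ∞) f Om) :
    ∀ m : ℕ, ContDiffOn ℝ (⊤:ℕ∞) ((dunklLap n Rplus k)^[m] f) Om := by
  intro m
  induction m with
  | zero => simpa using hf
  | succ m ih =>
    rw [Function.iterate_succ_apply']
    exact contDiffOn_dunklLap hOm hrefl hB ih

lemma iter_homog (hOm : IsOpen Om)
    (hsmul : ∀ l : ℝ, 0 < l → ∀ X ∈ Om, l • X ∈ Om)
    (hrefl : ∀ α ∈ Rplus, ∀ X ∈ Om, reflct n α X ∈ Om)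
    (hB : ∀ α ∈ Rplus, ∀ X ∈ Om, Bform n α X ≠ 0)
    {f : (Fin (n+2) → ℝ) → ℝ} {d : ℝ} (hf : ContDiffOn ℝ (⊤:ℕ∞) f Om)
    (hhom : ∀ l : ℝ, 0 < l → ∀ X ∈ Om, f (l • X) = l ^ d * f X) :
    ∀ m : ℕ, ∀ l : ℝ, 0 < l → ∀ X ∈ Om,
      (dunklLap n Rplus k)^[m] f (l • X)
        = l ^ (d - 2*(m:ℝ)) * (dunklLap n Rplus k)^[m] f X := by
  intro m
  induction m with
  | zero =>
    intro l hl X hX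
    have he : d - 2*((0:ℕ):ℝ) = d := by norm_num
    rw [he]
    simpa using hhom l hl X hX
  | succ m ih =>
    intro l hl X hX
    rw [Function.iterate_succ_apply']
    have hsm := iter_smooth (k := k) hOm hrefl hB hf m
    have := dunklLap_homog (k := k) hOm hsmul hrefl hB hsm (d := d - 2*(m:ℝ))
      (fun l' hl' Y hY => ih l' hl' Y hY) hl hX
    rw [this, show d - 2*(m:ℝ) - 2 = d - 2*(((m+1):ℕ):ℝ) by push_cast; ring]

end Tools
end Aux

/-- for `j ≥ 1`, `w = −n/2 + j − γ_k`, `q(X) = B(X,X)` and `g` smooth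
on `Ω` and homogeneous of degree `w − 2`, the `j`-fold iterate `Δ_k^j(q·g)` vanishes
at every point of the null cone lying in `Ω`; consequently `Δ_k^j` restricted to
`w`-homogeneous functions on the null cone is independent of the chosen extension. -/
theorem stmt12 (n : ℕ) (hn : 1 ≤ n)
    (R Rplus : Finset (Fin (n + 2) → ℝ)) (k : (Fin (n + 2) → ℝ) → ℝ)
    (hR : IsRootSystem n R) (hk : IsMultiplicity n R k) (hP : IsPositive n R Rplus)
    (j : ℕ) (hj : 1 ≤ j)
    (w : ℝ) (hw : w = -(n : ℝ) / 2 + (j : ℝ) - ∑ α ∈ Rplus, k α)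
    (g : (Fin (n + 2) → ℝ) → ℝ)
    (hg : ContDiffOn ℝ (⊤ : ℕ∞) g
      {X : Fin (n + 2) → ℝ | X ≠ 0 ∧ ∀ α ∈ Rplus, Bform n α X ≠ 0})
    (hghom : ∀ l : ℝ, 0 < l → ∀ X : Fin (n + 2) → ℝ,
      X ≠ 0 → (∀ α ∈ Rplus, Bform n α X ≠ 0) → g (l • X) = l ^ (w - 2) * g X) :
    (∀ X : Fin (n + 2) → ℝ, X ≠ 0 → (∀ α ∈ Rplus, Bform n α X ≠ 0) →
      Bform n X X = 0 →
      (dunklLap n Rplus k)^[j] (fun Y => Bform n Y Y * g Y) X = 0) ∧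
    (∀ ft ft1 : (Fin (n + 2) → ℝ) → ℝ,
      ContDiffOn ℝ (⊤ : ℕ∞) ft
        {X : Fin (n + 2) → ℝ | X ≠ 0 ∧ ∀ α ∈ Rplus, Bform n α X ≠ 0} →
      (∀ Y, ft1 Y = ft Y + Bform n Y Y * g Y) →
      ∀ X : Fin (n + 2) → ℝ, X ≠ 0 → (∀ α ∈ Rplus, Bform n α X ≠ 0) →
        Bform n X X = 0 →
        (dunklLap n Rplus k)^[j] ft1 X = (dunklLap n Rplus k)^[j] ft X) := by
  classical
  set Om : Set (Fin (n+2) → ℝ) := {X : Fin (n + 2) → ℝ | X ≠ 0 ∧ ∀ α ∈ Rplus, Bform n α X ≠ 0}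
    with hOmdef
  have hOm : IsOpen Om := by
    have h2 : IsOpen (⋂ α ∈ Rplus, {X : Fin (n+2) → ℝ | Bform n α X ≠ 0}) := by
      refine isOpen_biInter_finset fun α _ => ?_
      have hc : Continuous fun X : Fin (n+2) → ℝ => Bform n α X := by
        have he : (fun X : Fin (n+2) → ℝ => Bform n α X) = ⇑(Aux.Bclm n α) := by
          funext Y; rw [Aux.Bclm_apply]
        rw [he]; exact (Aux.Bclm n α).continuous
      exact isOpen_ne.preimage hc
    have h1 : IsOpen {X : Fin (n+2) → ℝ | X ≠ (0 : Fin (n+2) → ℝ)} := isOpen_ne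
    have heq : Om = {X : Fin (n+2) → ℝ | X ≠ 0}
        ∩ ⋂ α ∈ Rplus, {X : Fin (n+2) → ℝ | Bform n α X ≠ 0} := by
      rw [hOmdef]
      ext X
      simp [Set.mem_iInter]
    rw [heq]
    exact h1.inter h2
  have hB : ∀ α ∈ Rplus, ∀ X ∈ Om, Bform n α X ≠ 0 := fun α hα X hX => hX.2 α hα
  have hAA : ∀ α ∈ Rplus, Bform n α α ≠ 0 := fun α hα => hR.1 α (hP.1 hα)
  have hrefl : ∀ α ∈ Rplus, ∀ X ∈ Om, reflct n α X ∈ Om := by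
    intro α hα X hX
    have hαR : α ∈ R := hP.1 hα
    have hAAα : Bform n α α ≠ 0 := hR.1 α hαR
    constructor
    · intro hzero
      apply hX.1
      have h := congrArg (reflct n α) hzero
      rw [Aux.reflct_invol α X hAAα, Aux.reflct_zero α] at h
      exact h
    · intro β hβ
      have hβR : β ∈ R := hP.1 hβ
      have hγR : reflct n α β ∈ R := hR.2.2.2 α hαR β hβR
      have hBeq : Bform n β (reflct n α X) = Bform n (reflct n α β) X := by
        rw [Aux.Bform_symm, Aux.Bform_reflct, Aux.Bform_symm]
      rcases hP.2.1 _ hγR with hmem | hmem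
      · rw [hBeq]; exact hX.2 _ hmem
      · rw [hBeq]
        intro h0
        apply hX.2 _ hmem
        rw [Aux.Bform_neg_left, h0, neg_zero]
  have hsmul : ∀ l : ℝ, 0 < l → ∀ X ∈ Om, l • X ∈ Om := by
    intro l hl X hX
    refine ⟨smul_ne_zero (ne_of_gt hl) hX.1, fun α hα => ?_⟩
    rw [Aux.Bform_smul_right]
    exact mul_ne_zero (ne_of_gt hl) (hX.2 α hα)
  have hg' : ContDiffOn ℝ (⊤:ℕ∞) g Om := hg.of_le (by simp)
  have hghom' : ∀ l : ℝ, 0 < l → ∀ X ∈ Om, g (l • X) = l ^ (w-2) * g X :=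
    fun l hl X hX => hghom l hl X hX.1 hX.2
  have hQ : ContDiffOn ℝ (⊤:ℕ∞) (fun Y : Fin (n+2) → ℝ => Bform n Y Y) Om :=
    Aux.contDiff_q.contDiffOn
  -- smoothness and homogeneity of the iterates of g
  have hGsm : ∀ m : ℕ, ContDiffOn ℝ (⊤:ℕ∞) ((dunklLap n Rplus k)^[m] g) Om :=
    Aux.iter_smooth hOm hrefl hB hg'
  have hGhom : ∀ m : ℕ, ∀ l : ℝ, 0 < l → ∀ X ∈ Om,
      (dunklLap n Rplus k)^[m] g (l • X)
        = l ^ (w - 2 - 2*(m:ℝ)) * (dunklLap n Rplus k)^[m] g X := by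
    intro m l hl X hX
    have h := Aux.iter_homog (k := k) hOm hsmul hrefl hB hg' hghom' m l hl X hX
    rw [show w - 2 - 2*(m:ℝ) = (w - 2) - 2*(m:ℝ) by ring]
    exact h
  have hGeuler : ∀ m : ℕ, ∀ X ∈ Om,
      fderiv ℝ ((dunklLap n Rplus k)^[m] g) X X
        = (w - 2 - 2*(m:ℝ)) * (dunklLap n Rplus k)^[m] g X :=
    fun m X hX => Aux.euler hOm (hGsm m) (fun l hl Y hY => hGhom m l hl Y hY) hX
  -- main induction
  have key : ∀ s : ℕ, ∀ X ∈ Om,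
      (dunklLap n Rplus k)^[s+1] (fun Y => Bform n Y Y * g Y) X
        = Bform n X X * (dunklLap n Rplus k)^[s+1] g X
          + (4*((s:ℝ)+1)*((j:ℝ)-((s:ℝ)+1))) * (dunklLap n Rplus k)^[s] g X := by
    intro s
    induction s with
    | zero =>
      intro X hX
      simp only [zero_add, Function.iterate_one, Function.iterate_zero_apply, Nat.cast_zero]
      rw [Aux.dunklLap_qmul hOm hrefl hB hAA hg' hX,
        Aux.euler hOm hg' hghom' hX]
      rw [hw]
      push_cast
      ring
    | succ s ih =>
      intro X hX
      rw [Function.iterate_succ_apply']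
      rw [Aux.dunklLap_congr_on hOm hrefl
        (v := fun Y => Bform n Y Y * (dunklLap n Rplus k)^[s+1] g Y
          + (4*((s:ℝ)+1)*((j:ℝ)-((s:ℝ)+1))) * (dunklLap n Rplus k)^[s] g Y)
        (fun Y hY => ih Y hY) hX]
      rw [Aux.dunklLap_lin hOm (4*((s:ℝ)+1)*((j:ℝ)-((s:ℝ)+1)))
        (hQ.mul (hGsm (s+1))) (hGsm s) hX]
      rw [Aux.dunklLap_qmul hOm hrefl hB hAA (hGsm (s+1)) hX,
        hGeuler (s+1) X hX,
        ← Function.iterate_succ_apply' (dunklLap n Rplus k) (s+1) g,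
        ← Function.iterate_succ_apply' (dunklLap n Rplus k) s g]
      rw [hw]
      push_cast
      ring
  obtain ⟨t, rfl⟩ : ∃ t, j = t + 1 := ⟨j - 1, by omega⟩
  have part1 : ∀ X : Fin (n + 2) → ℝ, X ≠ 0 → (∀ α ∈ Rplus, Bform n α X ≠ 0) →
      Bform n X X = 0 →
      (dunklLap n Rplus k)^[t+1] (fun Y => Bform n Y Y * g Y) X = 0 := by
    intro X h1 h2 h3
    have hX : X ∈ Om := ⟨h1, h2⟩
    rw [key t X hX, h3]
    push_cast
    ring
  refine ⟨part1, ?_⟩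
  intro ft ft1 hft hft1 X h1 h2 h3
  have hX : X ∈ Om := ⟨h1, h2⟩
  have hft' : ContDiffOn ℝ (⊤:ℕ∞) ft Om := hft.of_le (by simp)
  have hqg : ContDiffOn ℝ (⊤:ℕ∞) (fun Y => Bform n Y Y * g Y) Om := hQ.mul hg'
  have hiter : ∀ m : ℕ, ∀ Y ∈ Om, (dunklLap n Rplus k)^[m] ft1 Y
      = (dunklLap n Rplus k)^[m] ft Y
        + 1 * (dunklLap n Rplus k)^[m] (fun Y => Bform n Y Y * g Y) Y := by
    intro m
    induction m with
    | zero =>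
      intro Y hY
      simpa using hft1 Y
    | succ m ih =>
      intro Y hY
      rw [Function.iterate_succ_apply']
      rw [Aux.dunklLap_congr_on hOm hrefl
        (v := fun Z => (dunklLap n Rplus k)^[m] ft Z
          + 1 * (dunklLap n Rplus k)^[m] (fun Y => Bform n Y Y * g Y) Z)
        (fun Z hZ => ih Z hZ) hY]
      rw [Aux.dunklLap_lin hOm 1
        (Aux.iter_smooth hOm hrefl hB hft' m)
        (Aux.iter_smooth hOm hrefl hB hqg m) hY,
        ← Function.iterate_succ_apply' (dunklLap n Rplus k) m ft,
        ← Function.iterate_succ_apply' (dunklLap n Rplus k) m (fun Y => Bform n Y Y * g Y)]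
  rw [hiter (t+1) X hX, part1 X h1 h2 h3]
  ring
end
end

section
/- Let w ∈ ℝ, let f : ℝ^n → ℝ be smooth, and define f̃ on {X ∈ ℝ^{n+2} : X^0 > 0} by f̃(X) := (X^0)^w · f(X^1/X^0, …, X^n/X^0) (the ρ-independent homogeneous extension). Then for every X with X^0 > 0: (Δ̃ f̃)(X) = (X^0)^{w−2} · (Σ_{i=1}^n ∂²f/∂x_i²)(X^1/X^0, …, X^n/X^0). In particular, at X(x) = (1, x, −½Σx_i²) one has (Δ̃ f̃)(X(x)) = Σ_{i=1}^n (∂²f/∂x_i²)(x), i.e. the ambient Laplacian descends to the euclidean Laplacian in the local chart. -/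
open scoped BigOperators
open Real

noncomputable section

-- auxiliary
lemma mid_ne_zero (n : ℕ) (i : Fin n) : mid n i ≠ 0 := by
  simp [mid, Fin.ext_iff]

lemma mid_ne_inf (n : ℕ) (i : Fin n) : mid n i ≠ infIdx n := by
  simp [mid, infIdx, Fin.ext_iff]; omega

lemma inf_ne_zero (n : ℕ) : infIdx n ≠ 0 := by
  simp [infIdx, Fin.ext_iff]

lemma mid_inj (n : ℕ) {i j : Fin n} (h : mid n i = mid n j) : i = j := by
  simpa [mid, Fin.ext_iff] using h

def projL (n : ℕ) : ((Fin (n+2) → ℝ)) →L[ℝ] ℝ × (Fin n → ℝ) :=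
  (ContinuousLinearMap.proj 0).prod (ContinuousLinearMap.pi fun i => ContinuousLinearMap.proj (mid n i))

lemma projL_apply (n : ℕ) (Y : Fin (n+2) → ℝ) :
    projL n Y = (Y 0, fun i => Y (mid n i)) := rfl

lemma proj_basis0 (n : ℕ) : projL n (basisVec n 0) = ((1:ℝ), (0 : Fin n → ℝ)) := by
  rw [projL_apply]
  refine Prod.ext ?_ ?_
  · simp [basisVec]
  · funext i
    exact Pi.single_eq_of_ne (mid_ne_zero n i) 1

lemma proj_basisInf (n : ℕ) : projL n (basisVec n (infIdx n)) = 0 := by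
  rw [projL_apply]
  refine Prod.ext ?_ ?_
  · exact Pi.single_eq_of_ne (Ne.symm (inf_ne_zero n)) 1
  · funext i
    exact Pi.single_eq_of_ne (mid_ne_inf n i) 1

lemma proj_basisMid (n : ℕ) (i : Fin n) :
    projL n (basisVec n (mid n i)) = ((0:ℝ), Pi.single i 1) := by
  rw [projL_apply]
  refine Prod.ext ?_ ?_
  · exact Pi.single_eq_of_ne (Ne.symm (mid_ne_zero n i)) 1
  · funext j
    by_cases h : j = i
    · subst h; simp [basisVec]
    · have h2 : mid n j ≠ mid n i := fun hc => h (mid_inj n hc)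
      simp [basisVec, Pi.single_eq_of_ne h2, Pi.single_eq_of_ne h]

def Gfun (n : ℕ) (w : ℝ) (g : (Fin n → ℝ) → ℝ) (q : ℝ × (Fin n → ℝ)) : ℝ :=
  q.1 ^ w * g (q.1⁻¹ • q.2)

lemma key {n : ℕ} (w : ℝ) (g : (Fin n → ℝ) → ℝ) (hg : Differentiable ℝ g)
    (p : ℝ × (Fin n → ℝ)) (hp : 0 < p.1) :
    ∃ L : (ℝ × (Fin n → ℝ)) →L[ℝ] ℝ, HasFDerivAt (Gfun n w g) L p ∧
      ∀ u : Fin n → ℝ, L (0, u) = p.1 ^ (w - 1) * fderiv ℝ g (p.1⁻¹ • p.2) u := by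
  have hA : HasFDerivAt (fun q : ℝ × (Fin n → ℝ) => q.1 ^ w)
      ((w * p.1 ^ (w-1)) • ContinuousLinearMap.fst ℝ ℝ (Fin n → ℝ)) p :=
    (Real.hasDerivAt_rpow_const (Or.inl hp.ne')).comp_hasFDerivAt p hasFDerivAt_fst
  have hinv : HasFDerivAt (fun q : ℝ × (Fin n → ℝ) => q.1⁻¹)
      ((-(p.1 ^ 2)⁻¹) • ContinuousLinearMap.fst ℝ ℝ (Fin n → ℝ)) p :=
    (hasDerivAt_inv hp.ne').comp_hasFDerivAt p hasFDerivAt_fst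
  have hB : HasFDerivAt (fun q : ℝ × (Fin n → ℝ) => q.1⁻¹ • q.2)
      (p.1⁻¹ • ContinuousLinearMap.snd ℝ ℝ (Fin n → ℝ) +
        ((-(p.1 ^ 2)⁻¹) • ContinuousLinearMap.fst ℝ ℝ (Fin n → ℝ)).smulRight p.2) p :=
    hinv.smul hasFDerivAt_snd
  have hgB := ((hg (p.1⁻¹ • p.2)).hasFDerivAt).comp p hB
  have hG := hA.mul hgB
  refine ⟨_, hG, fun u => ?_⟩
  have hrw : p.1 ^ w * p.1⁻¹ = p.1 ^ (w - 1) := by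
    rw [Real.rpow_sub hp, Real.rpow_one, div_eq_mul_inv]
  simp [ContinuousLinearMap.add_apply, ContinuousLinearMap.smul_apply,
    ContinuousLinearMap.comp_apply, ContinuousLinearMap.smulRight_apply,
    ContinuousLinearMap.coe_fst', ContinuousLinearMap.coe_snd', map_smul,
    smul_eq_mul, ← hrw]
  ring

lemma gcont {n : ℕ} (w : ℝ) (g : (Fin n → ℝ) → ℝ) (hg : ContDiff ℝ (⊤ : ℕ∞) g)
    (p : ℝ × (Fin n → ℝ)) (hp : p.1 ≠ 0) :
    ContDiffAt ℝ (⊤ : ℕ∞) (Gfun n w g) p := by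
  have h1 : ContDiffAt ℝ (⊤ : ℕ∞) (fun q : ℝ × (Fin n → ℝ) => q.1 ^ w) p :=
    (Real.contDiffAt_rpow_const_of_ne hp).comp p contDiffAt_fst
  have h2 : ContDiffAt ℝ (⊤ : ℕ∞) (fun q : ℝ × (Fin n → ℝ) => q.1⁻¹ • q.2) p :=
    (contDiffAt_fst.inv hp).smul contDiffAt_snd
  exact h1.mul ((hg.contDiffAt).comp p h2)


/-- for the ρ-independent homogeneous extension
`f̃(X) = (X^0)^w f(X^1/X^0, …, X^n/X^0)` one has, on `{X^0 > 0}`,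
`(Δ̃ f̃)(X) = (X^0)^{w−2} (Σ ∂²f/∂x_i²)(X^1/X^0, …, X^n/X^0)`; in particular at
`X(x)` the ambient Laplacian descends to the euclidean Laplacian. -/
theorem stmt13 (n : ℕ) (hn : 1 ≤ n) (w : ℝ)
    (f : (Fin n → ℝ) → ℝ) (hf : ContDiff ℝ (⊤ : ℕ∞) f) :
    (∀ X : Fin (n + 2) → ℝ, 0 < X 0 →
      ambLap n (ftil n w f) X
        = (X 0) ^ (w - 2) *
            ∑ i : Fin n, fderiv ℝ (fun y => fderiv ℝ f y (Pi.single i 1))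
              (fun j => X (mid n j) / X 0) (Pi.single i 1)) ∧
    (∀ x : Fin n → ℝ,
      ambLap n (ftil n w f) (Xmap n x)
        = ∑ i : Fin n, fderiv ℝ (fun y => fderiv ℝ f y (Pi.single i 1)) x (Pi.single i 1)) := by
  have hfd : Differentiable ℝ f := hf.differentiable (by simp)
  have hgsmooth : ∀ i : Fin n, ContDiff ℝ (⊤ : ℕ∞) (fun y => fderiv ℝ f y (Pi.single i 1)) :=
    fun i => by
      exact (ContinuousLinearMap.apply ℝ ℝ (Pi.single i 1)).contDiff.comp (hf.fderiv_right (m := ((⊤ : ℕ∞) : WithTop ℕ∞)) (by exact_mod_cast (le_top : (⊤ : ℕ∞) + 1 ≤ ⊤)))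
  have hgd : ∀ i : Fin n, Differentiable ℝ (fun y => fderiv ℝ f y (Pi.single i 1)) :=
    fun i => (hgsmooth i).differentiable (by simp)
  have hsopen : IsOpen {Y : Fin (n+2) → ℝ | 0 < Y 0} :=
    isOpen_lt continuous_const (continuous_apply 0)
  have hq : ∀ Y : Fin (n+2) → ℝ, ((Y 0)⁻¹ • fun i => Y (mid n i)) = fun j => Y (mid n j) / Y 0 := by
    intro Y; funext j; simp [div_eq_inv_mul]
  have hftil_eq : ftil n w f = fun Y => Gfun n w f (projL n Y) := by
    funext Y
    simp only [ftil, Gfun, projL_apply, hq Y]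
  have main : ∀ X : Fin (n + 2) → ℝ, 0 < X 0 →
      ambLap n (ftil n w f) X
        = (X 0) ^ (w - 2) *
            ∑ i : Fin n, fderiv ℝ (fun y => fderiv ℝ f y (Pi.single i 1))
              (fun j => X (mid n j) / X 0) (Pi.single i 1) := by
    intro X hX
    have hXp : 0 < (projL n X).1 := hX
    -- term 0
    have hev0 : (fun Y => fderiv ℝ (ftil n w f) Y (basisVec n 0)) =ᶠ[nhds X]
        (fun Y => fderiv ℝ (Gfun n w f) (projL n Y) ((1:ℝ), (0:Fin n → ℝ))) := by
      filter_upwards [hsopen.mem_nhds hX] with Y hY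
      obtain ⟨L, hL, _⟩ := key w f hfd (projL n Y) hY
      have hft : HasFDerivAt (ftil n w f) (L.comp (projL n)) Y := by
        rw [hftil_eq]; exact hL.comp Y (projL n).hasFDerivAt
      rw [hft.fderiv, hL.fderiv, ContinuousLinearMap.comp_apply, proj_basis0]
    have hdiff1 : DifferentiableAt ℝ
        (fun q => fderiv ℝ (Gfun n w f) q ((1:ℝ), (0:Fin n → ℝ))) (projL n X) := by
      have h := (gcont w f hf (projL n X) hXp.ne').fderiv_right (m := 1) (by exact WithTop.coe_le_coe.mpr le_top)
      exact (ContinuousLinearMap.apply ℝ ℝ ((1:ℝ), (0:Fin n → ℝ))).differentiableAt.comp _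
        (h.differentiableAt one_ne_zero)
    have term0 : fderiv ℝ (fun Y => fderiv ℝ (ftil n w f) Y (basisVec n 0)) X
        (basisVec n (infIdx n)) = 0 := by
      rw [hev0.fderiv_eq]
      rw [show (fun Y => fderiv ℝ (Gfun n w f) (projL n Y) ((1:ℝ), (0:Fin n → ℝ)))
          = (fun q => fderiv ℝ (Gfun n w f) q ((1:ℝ), (0:Fin n → ℝ))) ∘ (projL n) from rfl]
      rw [fderiv_comp X hdiff1 (projL n).differentiableAt, (projL n).fderiv,
        ContinuousLinearMap.comp_apply, proj_basisInf, map_zero]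
    -- mid terms
    have termi : ∀ i : Fin n,
        fderiv ℝ (fun Y => fderiv ℝ (ftil n w f) Y (basisVec n (mid n i))) X
          (basisVec n (mid n i))
        = (X 0) ^ (w - 2) * fderiv ℝ (fun y => fderiv ℝ f y (Pi.single i 1))
            (fun j => X (mid n j) / X 0) (Pi.single i 1) := by
      intro i
      have hevi : (fun Y => fderiv ℝ (ftil n w f) Y (basisVec n (mid n i))) =ᶠ[nhds X]
          (fun Y => Gfun n (w-1) (fun y => fderiv ℝ f y (Pi.single i 1)) (projL n Y)) := by
        filter_upwards [hsopen.mem_nhds hX] with Y hY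
        obtain ⟨L, hL, hLu⟩ := key w f hfd (projL n Y) hY
        have hft : HasFDerivAt (ftil n w f) (L.comp (projL n)) Y := by
          rw [hftil_eq]; exact hL.comp Y (projL n).hasFDerivAt
        rw [hft.fderiv, ContinuousLinearMap.comp_apply, proj_basisMid, hLu (Pi.single i 1)]
        rfl
      rw [hevi.fderiv_eq]
      obtain ⟨L', hL', hL'u⟩ :=
        key (w-1) (fun y => fderiv ℝ f y (Pi.single i 1)) (hgd i) (projL n X) hXp
      have hcomp : HasFDerivAt
          (fun Y => Gfun n (w-1) (fun y => fderiv ℝ f y (Pi.single i 1)) (projL n Y))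
          (L'.comp (projL n)) X := hL'.comp X (projL n).hasFDerivAt
      rw [hcomp.fderiv, ContinuousLinearMap.comp_apply, proj_basisMid, hL'u (Pi.single i 1)]
      have h1 : (projL n X).1 = X 0 := rfl
      have h2 : ((projL n X).1⁻¹ • (projL n X).2) = fun j => X (mid n j) / X 0 := hq X
      rw [h2, h1, show w - 1 - 1 = w - 2 by ring]
    rw [ambLap, term0, mul_zero, zero_add, Finset.sum_congr rfl (fun i _ => termi i),
      ← Finset.mul_sum]
  refine ⟨main, fun x => ?_⟩
  have hx0 : Xmap n x 0 = 1 := by simp [Xmap]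
  have hxm : ∀ j : Fin n, Xmap n x (mid n j) = x j := by
    intro j
    rw [mid, ← Fin.succ_castSucc]
    simp [Xmap, Fin.cons_succ, Fin.snoc_castSucc]
  rw [main (Xmap n x) (by rw [hx0]; norm_num)]
  simp [hx0, hxm, Real.one_rpow]
end
end
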